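/- arXiv:2306.08084 — 8 statements merged into one kernel-verified Lean document; each statement's English description precedes it below -/
import Mathlib

section
/- Suppose 𝒳 is a standard Borel space, and let κ₁ and κ₀ be regular conditional distributions (disintegration kernels) of Y given X under μ₁ and μ₀ respectively. Assume that for μ₀∘X⁻¹-a.e. x, 0 < ∫ e^{η q(y)} κ₁(x, dy) < ∞ and κ₀(x, ·) has density y ↦ e^{η q(y)} / ∫ e^{η q(u)} κ₁(x, du) with respect to κ₁(x, ·) (the exponential tilt model). Then, defining b(x) = (∫ ℓ(x,y) e^{η q(y)} κ₁(x,dy)) / (∫ e^{η q(y)} κ₁(x,dy)), the function b∘X is a version of the μ₀-conditional expectation E_{μ₀}[ℓ(X,Y) | σ(X)], whenever ℓ(X,Y) e^{η q(Y)} is μ₁-integrable and ℓ(X,Y) is μ₀-integrable. -/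
open MeasureTheory ProbabilityTheory Real

/-! Disintegrating the joint law of `(X, Y)` under `μ₀` through `κ₀` identifies `μ₀[ℓ(X,Y) | σ(X)]`
with `x ↦ ∫ ℓ(x,y) κ₀(x,dy)` evaluated at `X`. Under the tilt model `κ₀(x,·)` has density
`e^{η q} / ∫ e^{η q} dκ₁(x,·)` with respect to `κ₁(x,·)`, and integrating against this density
is exactly the ratio `b(x)`. -/

theorem integral_withDensity_ofReal_div_eq {α : Type*} [MeasurableSpace α] {ν : Measure α}
    {w : α → ℝ} (hw : AEMeasurable w ν) (hw_nonneg : ∀ y, 0 ≤ w y) {Z : ℝ} (hZ : 0 ≤ Z)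
    (f : α → ℝ) :
    ∫ y, f y ∂ν.withDensity (fun y => ENNReal.ofReal (w y / Z)) = (∫ y, f y * w y ∂ν) / Z := by
  have hdensity : AEMeasurable (fun y => ENNReal.ofReal (w y / Z)) ν :=
    (hw.div_const Z).ennreal_ofReal
  rw [integral_withDensity_eq_integral_toReal_smul₀ hdensity
      (Filter.Eventually.of_forall fun _ => ENNReal.ofReal_lt_top),
    div_eq_mul_inv, ← integral_mul_const]
  congr 1 with y
  rw [ENNReal.toReal_ofReal (div_nonneg (hw_nonneg y) hZ), smul_eq_mul]
  ring

theorem condExp_ae_eq_integral_of_map_eq_compProd {Ω β γ F : Type*} {mΩ : MeasurableSpace Ω}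
    {mβ : MeasurableSpace β} [MeasurableSpace γ] [StandardBorelSpace γ] [Nonempty γ]
    [NormedAddCommGroup F] [NormedSpace ℝ F] [CompleteSpace F]
    {μ : Measure Ω} [IsFiniteMeasure μ] {X : Ω → β} {Y : Ω → γ} {κ : Kernel β γ}
    [IsFiniteKernel κ] (hX : Measurable X) (hY : Measurable Y)
    (hκ : μ.map (fun ω => (X ω, Y ω)) = μ.map X ⊗ₘ κ) {f : β × γ → F}
    (hf : StronglyMeasurable f) (hf_int : Integrable (fun ω => f (X ω, Y ω)) μ) :
    μ[fun ω => f (X ω, Y ω) | mβ.comap X] =ᵐ[μ] fun ω => ∫ y, f (X ω, y) ∂κ (X ω) := by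
  have hκ_eq : ∀ᵐ ω ∂μ, condDistrib Y X μ (X ω) = κ (X ω) :=
    ae_of_ae_map hX.aemeasurable (condDistrib_ae_eq_of_measure_eq_compProd_of_measurable hX hY hκ)
  filter_upwards [condExp_prod_ae_eq_integral_condDistrib hX hY.aemeasurable hf hf_int, hκ_eq]
    with ω hω hκω
  rw [hω, hκω]

theorem tilted_conditional_loss_is_condexp_general
    {Ω : Type*} [MeasurableSpace Ω]
    {𝒳 : Type*} [MeasurableSpace 𝒳]
    (X : Ω → 𝒳) (Y : Ω → ℝ)
    (hX : Measurable X) (hY : Measurable Y)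
    (μ₀ : Measure Ω) [IsProbabilityMeasure μ₀]
    -- κ₁ and κ₀ are regular conditional distributions of Y given X under μ₁ and μ₀:
    (κ₁ κ₀ : ProbabilityTheory.Kernel 𝒳 ℝ) [IsMarkovKernel κ₀]
    (hκ₀ : μ₀.map (fun ω => (X ω, Y ω)) = (μ₀.map X).compProd κ₀)
    (η : ℝ) (q : ℝ → ℝ) (hq : Measurable q)
    (ℓ : 𝒳 → ℝ → ℝ) (hℓ : Measurable (Function.uncurry ℓ))
    -- the exponential tilt model, for (μ₀ ∘ X⁻¹)-a.e. x:
    (htilt : ∀ᵐ x ∂(μ₀.map X),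
      (0 < ∫ y, Real.exp (η * q y) ∂(κ₁ x) ∧
        Integrable (fun y => Real.exp (η * q y)) (κ₁ x)) ∧
      κ₀ x = (κ₁ x).withDensity
        (fun y => ENNReal.ofReal
          (Real.exp (η * q y) / ∫ u, Real.exp (η * q u) ∂(κ₁ x))))
    (hint₀ : Integrable (fun ω => ℓ (X ω) (Y ω)) μ₀) :
    (fun ω => (∫ y, ℓ (X ω) y * Real.exp (η * q y) ∂(κ₁ (X ω))) /
        (∫ y, Real.exp (η * q y) ∂(κ₁ (X ω))))
      =ᵐ[μ₀] μ₀[fun ω => ℓ (X ω) (Y ω) | MeasurableSpace.comap X inferInstance] := by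
  have hexp : Measurable fun y => Real.exp (η * q y) := (hq.const_mul η).exp
  have htilted_mean : ∀ᵐ x ∂(μ₀.map X),
      (∫ y, ℓ x y * Real.exp (η * q y) ∂(κ₁ x)) / (∫ y, Real.exp (η * q y) ∂(κ₁ x))
        = ∫ y, ℓ x y ∂(κ₀ x) := by
    filter_upwards [htilt] with x ⟨⟨hZ, _⟩, hκx⟩
    rw [hκx, integral_withDensity_ofReal_div_eq hexp.aemeasurable (fun y => (exp_pos _).le) hZ.le]
  filter_upwards [ae_of_ae_map hX.aemeasurable htilted_mean,
    condExp_ae_eq_integral_of_map_eq_compProd hX hY hκ₀ hℓ.stronglyMeasurable hint₀]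
    with ω hω hcond
  exact hω.trans hcond.symm

/-- Under the exponential tilt model stated at the level of regular conditional
distributions (disintegration kernels) of `Y` given `X` under the source (`μ₁`, i.e.
`S = 1`) and target (`μ₀`, i.e. `S = 0`) conditional measures, the tilted conditional loss
`b(x) = ∫ ℓ(x,y) e^{η q(y)} κ₁(x,dy) / ∫ e^{η q(y)} κ₁(x,dy)` composed with `X` is a version
of the `μ₀`-conditional expectation of the loss `ℓ(X,Y)` given `σ(X)`. -/
theorem tilted_conditional_loss_is_condexp
    {Ω : Type*} [MeasurableSpace Ω]
    {𝒳 : Type*} [MeasurableSpace 𝒳] [StandardBorelSpace 𝒳] [Nonempty 𝒳]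
    (μ : Measure Ω) [IsProbabilityMeasure μ]
    (X : Ω → 𝒳) (Y : Ω → ℝ) (S : Ω → Bool)
    (hX : Measurable X) (hY : Measurable Y) (hS : Measurable S)
    (hS1 : 0 < μ {ω | S ω = true}) (hS0 : 0 < μ {ω | S ω = false})
    (μ₁ μ₀ : Measure Ω) [IsProbabilityMeasure μ₁] [IsProbabilityMeasure μ₀]
    (hμ₁ : μ₁ = μ[|{ω | S ω = true}]) (hμ₀ : μ₀ = μ[|{ω | S ω = false}])
    -- κ₁ and κ₀ are regular conditional distributions of Y given X under μ₁ and μ₀: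
    (κ₁ κ₀ : ProbabilityTheory.Kernel 𝒳 ℝ) [IsMarkovKernel κ₁] [IsMarkovKernel κ₀]
    (hκ₁ : μ₁.map (fun ω => (X ω, Y ω)) = (μ₁.map X).compProd κ₁)
    (hκ₀ : μ₀.map (fun ω => (X ω, Y ω)) = (μ₀.map X).compProd κ₀)
    (η : ℝ) (q : ℝ → ℝ) (hq : Measurable q)
    (ℓ : 𝒳 → ℝ → ℝ) (hℓ : Measurable (Function.uncurry ℓ))
    -- the exponential tilt model, for (μ₀ ∘ X⁻¹)-a.e. x:
    (htilt : ∀ᵐ x ∂(μ₀.map X),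
      (0 < ∫ y, Real.exp (η * q y) ∂(κ₁ x) ∧
        Integrable (fun y => Real.exp (η * q y)) (κ₁ x)) ∧
      κ₀ x = (κ₁ x).withDensity
        (fun y => ENNReal.ofReal
          (Real.exp (η * q y) / ∫ u, Real.exp (η * q u) ∂(κ₁ x))))
    (hint₁ : Integrable (fun ω => ℓ (X ω) (Y ω) * Real.exp (η * q (Y ω))) μ₁)
    (hint₀ : Integrable (fun ω => ℓ (X ω) (Y ω)) μ₀) :
    (fun ω => (∫ y, ℓ (X ω) y * Real.exp (η * q y) ∂(κ₁ (X ω))) /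
        (∫ y, Real.exp (η * q y) ∂(κ₁ (X ω))))
      =ᵐ[μ₀] μ₀[fun ω => ℓ (X ω) (Y ω) | MeasurableSpace.comap X inferInstance] :=
  tilted_conditional_loss_is_condexp_general X Y hX hY μ₀ κ₁ κ₀ hκ₀ η q hq ℓ hℓ htilt hint₀
end

section
/- Let m : 𝒳 → ℝ be measurable such that (m·p)∘X is a version of E_μ[1_{S=1} W | σ(X)] (so m is a version of the conditional loss E[W | X, S=1]), with all displayed quantities integrable. Then the g-formula expression equals the inverse-odds weighting expression: E_{μ₀}[m(X)] = (1/μ(S=0)) · E_μ[ 1_{S=1} · ((1 − p(X))/p(X)) · W ]. -/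
/-!
Multiplied by `μ(S=0)`, both sides equal `E[(1 - p(X)) m(X)]`, by pulling a
`σ(X)`-measurable factor out of a conditional expectation given `X`. With the factor `m(X)` this gives
`E[1_{S=1} m(X)] = E[p(X) m(X)]`, hence
`μ(S=0) E_{μ₀}[m(X)] = E[m(X)] - E[1_{S=1} m(X)] = E[(1 - p(X)) m(X)]`; with the odds
`(1 - p(X))/p(X)` it gives `E[1_{S=1} (1 - p(X))/p(X) W] = E[(1 - p(X))/p(X) · m(X) p(X)]`.
-/

open MeasureTheory ProbabilityTheory Real

lemma integral_cond {Ω : Type*} [MeasurableSpace Ω] (μ : Measure Ω) (s : Set Ω) (f : Ω → ℝ) :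
    ∫ ω, f ω ∂μ[|s] = (μ.real s)⁻¹ * ∫ ω in s, f ω ∂μ := by
  rw [ProbabilityTheory.cond, integral_smul_measure, smul_eq_mul, ENNReal.toReal_inv,
    measureReal_def]

lemma ite_bool_eq_indicator {Ω : Type*} (S : Ω → Bool) (f : Ω → ℝ) :
    (fun ω => if S ω then f ω else 0) = {ω | S ω = true}.indicator f := by
  ext ω
  by_cases h : S ω <;> simp [h]

section PullOut

variable {Ω : Type*} {m m₀ : MeasurableSpace Ω} {μ : Measure[m₀] Ω} {s : Set Ω}
  {f g q : Ω → ℝ}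

lemma integrable_mul_condExp_of_stronglyMeasurable (hg : StronglyMeasurable[m] g)
    (hgf : Integrable (g * f) μ) (hf : Integrable f μ) : Integrable (g * μ[f | m]) μ :=
  integrable_condExp.congr (condExp_mul_of_stronglyMeasurable_left hg hgf hf)

lemma integral_mul_condExp_of_stronglyMeasurable (hm : m ≤ m₀) [SigmaFinite (μ.trim hm)]
    (hg : StronglyMeasurable[m] g) (hgf : Integrable (g * f) μ) (hf : Integrable f μ) :
    ∫ ω, g ω * μ[f | m] ω ∂μ = ∫ ω, g ω * f ω ∂μ := by
  calc ∫ ω, g ω * μ[f | m] ω ∂μ = ∫ ω, μ[g * f | m] ω ∂μ :=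
        integral_congr_ae (condExp_mul_of_stronglyMeasurable_left hg hgf hf).symm
    _ = ∫ ω, g ω * f ω ∂μ := integral_condExp hm

lemma setIntegral_compl_eq_integral_one_sub_mul (hm : m ≤ m₀) [IsFiniteMeasure μ]
    (hs : MeasurableSet s) (hq : q =ᵐ[μ] μ[s.indicator (fun _ => 1) | m])
    (hg : StronglyMeasurable[m] g) (hg_int : Integrable g μ) :
    ∫ ω in sᶜ, g ω ∂μ = ∫ ω, (1 - q ω) * g ω ∂μ := by
  have h_one_int : Integrable (s.indicator fun _ => (1 : ℝ)) μ :=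
    (integrable_const 1).indicator hs
  have hg_ind : g * s.indicator (fun _ => 1) = s.indicator g := by
    ext ω
    by_cases h : ω ∈ s <;> simp [h]
  have hg_ind_int : Integrable (g * s.indicator fun _ => 1) μ := hg_ind ▸ hg_int.indicator hs
  have hgq_int : Integrable (fun ω => g ω * q ω) μ :=
    (integrable_mul_condExp_of_stronglyMeasurable hg hg_ind_int h_one_int).congr
      (hq.mono fun ω hω => by simp [hω])
  have h_in_s : ∫ ω in s, g ω ∂μ = ∫ ω, g ω * q ω ∂μ := by
    calc ∫ ω in s, g ω ∂μ = ∫ ω, g ω * s.indicator (fun _ => 1) ω ∂μ := by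
          rw [← integral_indicator hs, ← hg_ind, Pi.mul_def]
      _ = ∫ ω, g ω * μ[s.indicator (fun _ => 1) | m] ω ∂μ :=
          (integral_mul_condExp_of_stronglyMeasurable hm hg hg_ind_int h_one_int).symm
      _ = ∫ ω, g ω * q ω ∂μ := integral_congr_ae (hq.mono fun ω hω => congrArg (g ω * ·) hω.symm)
  rw [setIntegral_compl hs hg_int, h_in_s, ← integral_sub hg_int hgq_int]
  congr 1 with ω
  ring

lemma setIntegral_odds_mul_eq_integral_one_sub_mul (hm : m ≤ m₀) [SigmaFinite (μ.trim hm)]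
    (hs : MeasurableSet s) {W : Ω → ℝ} (hW : Integrable W μ) (hq : StronglyMeasurable[m] q)
    (hq_pos : ∀ᵐ ω ∂μ, 0 < q ω) (hgq : (fun ω => g ω * q ω) =ᵐ[μ] μ[s.indicator W | m])
    (h_weighted : IntegrableOn (fun ω => (1 - q ω) / q ω * W ω) s μ) :
    ∫ ω in s, (1 - q ω) / q ω * W ω ∂μ = ∫ ω, (1 - q ω) * g ω ∂μ := by
  have h_odds : StronglyMeasurable[m] fun ω => (1 - q ω) / q ω :=
    ((measurable_const.sub hq.measurable).div hq.measurable).stronglyMeasurable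
  have h_ind : s.indicator (fun ω => (1 - q ω) / q ω * W ω)
      = (fun ω => (1 - q ω) / q ω) * s.indicator W := by
    ext ω
    exact Set.indicator_mul_right s _ W
  calc ∫ ω in s, (1 - q ω) / q ω * W ω ∂μ = ∫ ω, (1 - q ω) / q ω * s.indicator W ω ∂μ := by
        rw [← integral_indicator hs, h_ind, Pi.mul_def]
    _ = ∫ ω, (1 - q ω) / q ω * μ[s.indicator W | m] ω ∂μ :=
        (integral_mul_condExp_of_stronglyMeasurable hm h_odds
          (h_ind ▸ (integrable_indicator_iff hs).2 h_weighted) (hW.indicator hs)).symm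
    _ = ∫ ω, (1 - q ω) * g ω ∂μ := by
        refine integral_congr_ae ?_
        filter_upwards [hgq, hq_pos] with ω hgqω hqω
        rw [← hgqω]
        field_simp

end PullOut

theorem gformula_eq_inverse_odds_weighting_general
    {Ω : Type*} [MeasurableSpace Ω] {𝒳 : Type*} [MeasurableSpace 𝒳]
    (μ : Measure Ω) [IsProbabilityMeasure μ]
    (X : Ω → 𝒳) (Y : Ω → ℝ) (S : Ω → Bool)
    (hX : Measurable X) (hS : Measurable S)
    (ℓ : 𝒳 → ℝ → ℝ)
    (hW_int : Integrable (fun ω => ℓ (X ω) (Y ω)) μ)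
    (p : 𝒳 → ℝ) (hp : Measurable p)
    (hpver : (fun ω => p (X ω)) =ᵐ[μ]
      μ[fun ω => if S ω then (1 : ℝ) else 0 | MeasurableSpace.comap X inferInstance])
    (hppos : ∀ᵐ ω ∂μ, 0 < p (X ω))
    (m : 𝒳 → ℝ) (hm : Measurable m)
    (hmver : (fun ω => m (X ω) * p (X ω)) =ᵐ[μ]
      μ[fun ω => if S ω then ℓ (X ω) (Y ω) else 0 | MeasurableSpace.comap X inferInstance])
    (hm_int' : Integrable (fun ω => (1 - p (X ω)) * m (X ω)) μ)
    (hwt_int : Integrable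
      (fun ω => if S ω then ((1 - p (X ω)) / p (X ω)) * ℓ (X ω) (Y ω) else 0) μ) :
    ∫ ω, m (X ω) ∂(μ[|{ω | S ω = false}])
      = (μ {ω | S ω = false}).toReal⁻¹
        * ∫ ω, if S ω then ((1 - p (X ω)) / p (X ω)) * ℓ (X ω) (Y ω) else 0 ∂μ := by
  have hXm : Measurable[MeasurableSpace.comap X inferInstance] X := comap_measurable X
  have hS_true : MeasurableSet {ω | S ω = true} := hS (measurableSet_singleton true)
  have hS_false : {ω | S ω = false} = {ω | S ω = true}ᶜ := by ext; simp
  have hmX_int : Integrable (fun ω => m (X ω)) μ := by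
    refine (hm_int'.add (integrable_condExp.congr hmver.symm)).congr (ae_of_all _ fun ω => ?_)
    simp only [Pi.add_apply]
    ring
  rw [ite_bool_eq_indicator] at hpver hmver hwt_int ⊢
  rw [integral_cond, measureReal_def, hS_false,
    setIntegral_compl_eq_integral_one_sub_mul (g := fun ω => m (X ω)) hX.comap_le hS_true hpver
      (hm.comp hXm).stronglyMeasurable hmX_int,
    integral_indicator hS_true,
    setIntegral_odds_mul_eq_integral_one_sub_mul (q := fun ω => p (X ω)) hX.comap_le hS_true hW_int
      (hp.comp hXm).stronglyMeasurable hppos hmver ((integrable_indicator_iff hS_true).1 hwt_int)]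

/-- The g-formula expression for the target-population risk equals the inverse-odds
weighting expression: with `p∘X` a version of `E_μ[1_{S=1} | σ(X)]` satisfying positivity
and `(m·p)∘X` a version of `E_μ[1_{S=1} W | σ(X)]` (so `m` is a version of the conditional
loss `E[W | X, S=1]`), one has
`E_{μ₀}[m(X)] = (1/μ(S=0)) E_μ[1_{S=1} ((1−p(X))/p(X)) W]`. -/
theorem gformula_eq_inverse_odds_weighting
    {Ω : Type*} [MeasurableSpace Ω] {𝒳 : Type*} [MeasurableSpace 𝒳]
    (μ : Measure Ω) [IsProbabilityMeasure μ]
    (X : Ω → 𝒳) (Y : Ω → ℝ) (S : Ω → Bool)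
    (hX : Measurable X) (hY : Measurable Y) (hS : Measurable S)
    (hS1 : 0 < μ {ω | S ω = true}) (hS0 : 0 < μ {ω | S ω = false})
    (ℓ : 𝒳 → ℝ → ℝ) (hℓ : Measurable (Function.uncurry ℓ))
    (hW_int : Integrable (fun ω => ℓ (X ω) (Y ω)) μ)
    (p : 𝒳 → ℝ) (hp : Measurable p)
    (hpver : (fun ω => p (X ω)) =ᵐ[μ]
      μ[fun ω => if S ω then (1 : ℝ) else 0 | MeasurableSpace.comap X inferInstance])
    (hppos : ∀ᵐ ω ∂μ, 0 < p (X ω))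
    (m : 𝒳 → ℝ) (hm : Measurable m)
    (hmver : (fun ω => m (X ω) * p (X ω)) =ᵐ[μ]
      μ[fun ω => if S ω then ℓ (X ω) (Y ω) else 0 | MeasurableSpace.comap X inferInstance])
    (hm_int : Integrable (fun ω => m (X ω)) (μ[|{ω | S ω = false}]))
    (hm_int' : Integrable (fun ω => (1 - p (X ω)) * m (X ω)) μ)
    (hwt_int : Integrable
      (fun ω => if S ω then ((1 - p (X ω)) / p (X ω)) * ℓ (X ω) (Y ω) else 0) μ) :
    ∫ ω, m (X ω) ∂(μ[|{ω | S ω = false}])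
      = (μ {ω | S ω = false}).toReal⁻¹
        * ∫ ω, if S ω then ((1 - p (X ω)) / p (X ω)) * ℓ (X ω) (Y ω) else 0 ∂μ :=
  gformula_eq_inverse_odds_weighting_general μ X Y S hX hS ℓ hW_int p hp hpver hppos m hm hmver
    hm_int' hwt_int
end

section
/- Assume Y and S are conditionally independent given σ(X) (the conditional transportability assumption A2) and positivity (A1): p(X) > 0 μ-a.s. where p∘X is a version of E_μ[1_{S=1} | σ(X)]. Let m : 𝒳 → ℝ be measurable such that (m·p)∘X is a version of E_μ[1_{S=1} W | σ(X)]. Then the target-population risk is identified: E_{μ₀}[W] = E_{μ₀}[m(X)], i.e. the expected loss in the target population equals the μ₀-expectation of the source-population conditional loss. -/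
/-!
Conditional independence of `Y` and `S` given `σ(X)` upgrades, by a π-λ argument on the
rectangles `s₁ ∩ s₂` with `s₁ ∈ σ(X)`, `s₂ ∈ σ(Y)`, to `E[1_B | X, Y] = E[1_B | X]` for
`B ∈ σ(S)`; pulling `W = ℓ(X, Y)` out of `E[· | X, Y]` then gives
`E[W 1_B | X] = E[W | X] E[1_B | X]`. For `B = {S = 1}` the defining property of `m` becomes
`m(X) p(X) = E[W | X] p(X)`, so `m(X) = E[W | X]` by positivity. For `B = {S = 0}` both
`∫_{S = 0} W dμ` and `∫_{S = 0} m(X) dμ` equal `∫ E[W | X] E[1_{S=0} | X] dμ`.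
-/

open MeasureTheory ProbabilityTheory

namespace MeasurableSpace

variable {Ω : Type*}

theorem isPiSystem_image2_inter (m₁ m₂ : MeasurableSpace Ω) :
    IsPiSystem (Set.image2 (· ∩ ·) {s | MeasurableSet[m₁] s} {s | MeasurableSet[m₂] s}) := by
  rintro _ ⟨s₁, hs₁, s₂, hs₂, rfl⟩ _ ⟨t₁, ht₁, t₂, ht₂, rfl⟩ -
  exact ⟨s₁ ∩ t₁, hs₁.inter ht₁, s₂ ∩ t₂, hs₂.inter ht₂, Set.inter_inter_inter_comm _ _ _ _⟩

theorem sup_eq_generateFrom_image2_inter (m₁ m₂ : MeasurableSpace Ω) :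
    m₁ ⊔ m₂ = generateFrom (Set.image2 (· ∩ ·) {s | MeasurableSet[m₁] s}
      {s | MeasurableSet[m₂] s}) := by
  refine le_antisymm (sup_le ?_ ?_) (generateFrom_le ?_)
  · exact fun s hs ↦ measurableSet_generateFrom ⟨s, hs, Set.univ, .univ, Set.inter_univ s⟩
  · exact fun s hs ↦ measurableSet_generateFrom ⟨Set.univ, .univ, s, hs, Set.univ_inter s⟩
  · rintro _ ⟨s₁, hs₁, s₂, hs₂, rfl⟩
    exact (le_sup_left (b := m₂) _ hs₁).inter (le_sup_right (a := m₁) _ hs₂)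

end MeasurableSpace

namespace MeasureTheory

variable {Ω E : Type*} {m mΩ : MeasurableSpace Ω} {μ : Measure Ω}
  [NormedAddCommGroup E] [NormedSpace ℝ E]

theorem setIntegral_eq_of_isPiSystem (hm : m ≤ mΩ) {C : Set (Set Ω)}
    (h_eq : m = MeasurableSpace.generateFrom C) (h_inter : IsPiSystem C) (h_univ : Set.univ ∈ C)
    {f g : Ω → E} (hf : Integrable f μ) (hg : Integrable g μ)
    (basic : ∀ t ∈ C, ∫ x in t, f x ∂μ = ∫ x in t, g x ∂μ)
    {t : Set Ω} (ht : MeasurableSet[m] t) :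
    ∫ x in t, f x ∂μ = ∫ x in t, g x ∂μ := by
  induction t, ht using MeasurableSpace.induction_on_inter h_eq h_inter with
  | empty => simp
  | basic t ht => exact basic t ht
  | compl t ht ih =>
    have h_total := basic _ h_univ
    rw [Measure.restrict_univ] at h_total
    rw [← integral_add_compl (hm t ht) hf, ← integral_add_compl (hm t ht) hg, ih] at h_total
    exact add_left_cancel h_total
  | iUnion s hdisj hs ih =>
    rw [integral_iUnion (fun i ↦ hm _ (hs i)) hdisj hf.integrableOn,
      integral_iUnion (fun i ↦ hm _ (hs i)) hdisj hg.integrableOn]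
    exact tsum_congr ih

end MeasureTheory

namespace ProbabilityTheory

variable {Ω : Type*} {m' m₁ m₂ mΩ : MeasurableSpace Ω} {μ : Measure Ω}

theorem norm_condExp_indicator_le_one (s : Set Ω) : ∀ᵐ ω ∂μ, ‖(μ⟦s | m'⟧) ω‖ ≤ 1 := by
  refine ae_bdd_abs_condExp_of_ae_bdd_abs (ae_of_all μ fun ω ↦ ?_)
  by_cases hω : ω ∈ s <;> simp [hω]

variable [StandardBorelSpace Ω] [IsFiniteMeasure μ]

theorem condExp_indicator_sup_ae_eq_of_condIndep (hm' : m' ≤ mΩ) (hm₁ : m₁ ≤ mΩ)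
    (hm₂ : m₂ ≤ mΩ) (h : CondIndep m' m₁ m₂ hm' μ) {B : Set Ω} (hB : MeasurableSet[m₂] B) :
    μ⟦B | m' ⊔ m₁⟧ =ᵐ[μ] μ⟦B | m'⟧ := by
  have hB' : MeasurableSet B := hm₂ _ hB
  have h_ind : Integrable (B.indicator fun _ ↦ (1 : ℝ)) μ :=
    (integrable_const 1).indicator hB'
  refine (ae_eq_condExp_of_forall_setIntegral_eq (sup_le hm' hm₁) h_ind
    (fun _ _ _ ↦ integrable_condExp.integrableOn) (fun t ht _ ↦ ?_)
    (stronglyMeasurable_condExp.mono (le_sup_left : m' ≤ m' ⊔ m₁)).aestronglyMeasurable).symm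
  refine setIntegral_eq_of_isPiSystem (sup_le hm' hm₁)
    (MeasurableSpace.sup_eq_generateFrom_image2_inter m' m₁)
    (MeasurableSpace.isPiSystem_image2_inter m' m₁) ⟨_, .univ, _, .univ, Set.univ_inter _⟩
    integrable_condExp h_ind ?_ ht
  rintro _ ⟨s₁, hs₁, s₂, hs₂, rfl⟩
  have hs₂' : MeasurableSet s₂ := hm₁ _ hs₂
  have h_factor := (condIndep_iff m' m₁ m₂ hm' hm₁ hm₂ μ).1 h s₂ B hs₂ hB
  calc ∫ ω in s₁ ∩ s₂, (μ⟦B | m'⟧) ω ∂μ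
      = ∫ ω in s₁, ((μ⟦s₂ | m'⟧) * (μ⟦B | m'⟧)) ω ∂μ := by
        have h_eq : s₂.indicator (μ⟦B | m'⟧) = s₂.indicator (fun _ ↦ (1 : ℝ)) * μ⟦B | m'⟧ := by
          ext ω; by_cases hω : ω ∈ s₂ <;> simp [hω]
        have h_int : Integrable (s₂.indicator (μ⟦B | m'⟧)) μ := integrable_condExp.indicator hs₂'
        rw [← setIntegral_indicator hs₂', ← setIntegral_condExp hm' h_int hs₁, h_eq]
        refine setIntegral_congr_ae (hm' _ hs₁) (ae_imp_of_ae_restrict ?_)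
        exact ae_restrict_of_ae (condExp_mul_of_stronglyMeasurable_right
          stronglyMeasurable_condExp (h_eq ▸ h_int) ((integrable_const 1).indicator hs₂'))
    _ = ∫ ω in s₁, (μ⟦s₂ ∩ B | m'⟧) ω ∂μ :=
        setIntegral_congr_ae (hm' _ hs₁) (h_factor.mono fun _ h _ ↦ h.symm)
    _ = ∫ ω in s₁ ∩ s₂, B.indicator (fun _ ↦ (1 : ℝ)) ω ∂μ := by
        rw [setIntegral_condExp hm' ((integrable_const 1).indicator (hs₂'.inter hB')) hs₁,
          ← setIntegral_indicator hs₂', ← Set.indicator_indicator]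

theorem condExp_indicator_ae_eq_mul_of_condIndep (hm' : m' ≤ mΩ) (hm₁ : m₁ ≤ mΩ)
    (hm₂ : m₂ ≤ mΩ) (h : CondIndep m' m₁ m₂ hm' μ) {B : Set Ω} (hB : MeasurableSet[m₂] B)
    {f : Ω → ℝ} (hf : StronglyMeasurable[m' ⊔ m₁] f) (hfi : Integrable f μ) :
    μ[B.indicator f | m'] =ᵐ[μ] μ[f | m'] * μ⟦B | m'⟧ := by
  have hB' : MeasurableSet B := hm₂ _ hB
  have h_eq : B.indicator f = f * B.indicator (fun _ ↦ 1) := by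
    ext ω; by_cases hω : ω ∈ B <;> simp [hω]
  have h_inner : μ[B.indicator f | m' ⊔ m₁] =ᵐ[μ] μ⟦B | m'⟧ * f := by
    rw [h_eq]
    filter_upwards [condExp_mul_of_stronglyMeasurable_left hf (h_eq ▸ hfi.indicator hB')
        ((integrable_const 1).indicator hB'),
      condExp_indicator_sup_ae_eq_of_condIndep hm' hm₁ hm₂ h hB] with ω h_pull h_tower
    rw [h_pull, Pi.mul_apply, Pi.mul_apply, h_tower, mul_comm]
  calc μ[B.indicator f | m']
      =ᵐ[μ] μ[μ[B.indicator f | m' ⊔ m₁] | m'] :=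
        (condExp_condExp_of_le le_sup_left (sup_le hm' hm₁)).symm
    _ =ᵐ[μ] μ[μ⟦B | m'⟧ * f | m'] := condExp_congr_ae h_inner
    _ =ᵐ[μ] μ⟦B | m'⟧ * μ[f | m'] :=
        condExp_stronglyMeasurable_mul_of_bound hm' stronglyMeasurable_condExp hfi 1
          (norm_condExp_indicator_le_one B)
    _ = μ[f | m'] * μ⟦B | m'⟧ := mul_comm _ _

theorem setIntegral_eq_integral_condExp_mul_of_condIndep (hm' : m' ≤ mΩ) (hm₁ : m₁ ≤ mΩ)
    (hm₂ : m₂ ≤ mΩ) (h : CondIndep m' m₁ m₂ hm' μ) {B : Set Ω} (hB : MeasurableSet[m₂] B)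
    {f : Ω → ℝ} (hf : StronglyMeasurable[m' ⊔ m₁] f) (hfi : Integrable f μ) :
    ∫ ω in B, f ω ∂μ = ∫ ω, (μ[f | m'] * μ⟦B | m'⟧) ω ∂μ := by
  rw [← integral_indicator (hm₂ _ hB), ← integral_condExp hm',
    integral_congr_ae (condExp_indicator_ae_eq_mul_of_condIndep hm' hm₁ hm₂ h hB hf hfi)]

end ProbabilityTheory

theorem target_risk_identified_under_transportability_general
    {Ω : Type*} [MeasurableSpace Ω] [StandardBorelSpace Ω]
    {𝒳 : Type*} [MeasurableSpace 𝒳]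
    (μ : Measure Ω) [IsProbabilityMeasure μ]
    (X : Ω → 𝒳) (Y : Ω → ℝ) (S : Ω → Bool)
    (hX : Measurable X) (hY : Measurable Y) (hS : Measurable S)
    (ℓ : 𝒳 → ℝ → ℝ) (hℓ : Measurable (Function.uncurry ℓ))
    (hW_int : Integrable (fun ω => ℓ (X ω) (Y ω)) μ)
    -- A2: conditional transportability, Y ⫫ S | σ(X)
    (hCI : ProbabilityTheory.CondIndepFun (MeasurableSpace.comap X inferInstance)
      hX.comap_le Y S μ)
    -- A1: positivity
    (p : 𝒳 → ℝ)
    (hpver : (fun ω => p (X ω)) =ᵐ[μ]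
      μ[fun ω => if S ω then (1 : ℝ) else 0 | MeasurableSpace.comap X inferInstance])
    (hppos : ∀ᵐ ω ∂μ, 0 < p (X ω))
    (m : 𝒳 → ℝ) (hm : Measurable m)
    (hmver : (fun ω => m (X ω) * p (X ω)) =ᵐ[μ]
      μ[fun ω => if S ω then ℓ (X ω) (Y ω) else 0 | MeasurableSpace.comap X inferInstance]) :
    ∫ ω, ℓ (X ω) (Y ω) ∂(μ[|{ω | S ω = false}])
      = ∫ ω, m (X ω) ∂(μ[|{ω | S ω = false}]) := by
  set G := MeasurableSpace.comap X inferInstance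
  set W := fun ω => ℓ (X ω) (Y ω)
  have hG : G ≤ _ := hX.comap_le
  have h_indep := (condIndepFun_iff_condIndep G hG Y S μ).1 hCI
  have hW : StronglyMeasurable[G ⊔ MeasurableSpace.comap Y inferInstance] W :=
    (hℓ.comp ((measurable_iff_comap_le.2 le_sup_left).prodMk
      (measurable_iff_comap_le.2 le_sup_right))).stronglyMeasurable
  have hmX : StronglyMeasurable[G] (fun ω => m (X ω)) :=
    (hm.comp (comap_measurable X)).stronglyMeasurable
  have h_ite (c : Ω → ℝ) : (fun ω => if S ω then c ω else 0) = {ω | S ω = true}.indicator c := by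
    ext ω; by_cases hω : S ω <;> simp [hω]
  have h_true : MeasurableSet[MeasurableSpace.comap S inferInstance] {ω | S ω = true} :=
    ⟨{true}, trivial, rfl⟩
  have h_false : MeasurableSet[MeasurableSpace.comap S inferInstance] {ω | S ω = false} :=
    ⟨{false}, trivial, rfl⟩
  have hmW : (fun ω => m (X ω)) =ᵐ[μ] μ[W | G] := by
    rw [h_ite] at hmver hpver
    filter_upwards [hmver, hpver, hppos, condExp_indicator_ae_eq_mul_of_condIndep hG
      hY.comap_le hS.comap_le h_indep h_true hW hW_int]
      with ω h_mp h_p h_pos h_factor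
    rw [h_factor, Pi.mul_apply, ← h_p] at h_mp
    exact mul_right_cancel₀ h_pos.ne' h_mp
  have hmX_int : Integrable (fun ω => m (X ω)) μ := integrable_condExp.congr hmW.symm
  simp only [ProbabilityTheory.cond, integral_smul_measure]
  congr 1
  calc ∫ ω in {ω | S ω = false}, W ω ∂μ
      = ∫ ω, (μ[W | G] * μ⟦{ω | S ω = false} | G⟧) ω ∂μ :=
        setIntegral_eq_integral_condExp_mul_of_condIndep hG hY.comap_le hS.comap_le h_indep
          h_false hW hW_int
    _ = ∫ ω, (μ[fun ω => m (X ω) | G] * μ⟦{ω | S ω = false} | G⟧) ω ∂μ := by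
        rw [condExp_of_stronglyMeasurable hG hmX hmX_int]
        exact integral_congr_ae (hmW.symm.mul (ae_eq_refl _))
    _ = ∫ ω in {ω | S ω = false}, m (X ω) ∂μ :=
        (setIntegral_eq_integral_condExp_mul_of_condIndep hG hY.comap_le hS.comap_le h_indep
          h_false (hmX.mono le_sup_left) hmX_int).symm

/-- Identification of the target-population risk under conditional transportability (A2)
and positivity (A1): if `Y` and `S` are conditionally independent given `σ(X)`, `p∘X` is a
version of `E_μ[1_{S=1} | σ(X)]` with `p(X) > 0` μ-a.s., and `(m·p)∘X` is a version of
`E_μ[1_{S=1} W | σ(X)]` (so `m` is a version of the conditional loss `E[W | X, S=1]`),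
then `E_{μ₀}[W] = E_{μ₀}[m(X)]`. -/
theorem target_risk_identified_under_transportability
    {Ω : Type*} [MeasurableSpace Ω] [StandardBorelSpace Ω] [Nonempty Ω]
    {𝒳 : Type*} [MeasurableSpace 𝒳]
    (μ : Measure Ω) [IsProbabilityMeasure μ]
    (X : Ω → 𝒳) (Y : Ω → ℝ) (S : Ω → Bool)
    (hX : Measurable X) (hY : Measurable Y) (hS : Measurable S)
    (hS1 : 0 < μ {ω | S ω = true}) (hS0 : 0 < μ {ω | S ω = false})
    (ℓ : 𝒳 → ℝ → ℝ) (hℓ : Measurable (Function.uncurry ℓ))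
    (hW_int : Integrable (fun ω => ℓ (X ω) (Y ω)) μ)
    (hW_int₀ : Integrable (fun ω => ℓ (X ω) (Y ω)) (μ[|{ω | S ω = false}]))
    -- A2: conditional transportability, Y ⫫ S | σ(X)
    (hCI : ProbabilityTheory.CondIndepFun (MeasurableSpace.comap X inferInstance)
      hX.comap_le Y S μ)
    -- A1: positivity
    (p : 𝒳 → ℝ) (hp : Measurable p)
    (hpver : (fun ω => p (X ω)) =ᵐ[μ]
      μ[fun ω => if S ω then (1 : ℝ) else 0 | MeasurableSpace.comap X inferInstance])
    (hppos : ∀ᵐ ω ∂μ, 0 < p (X ω))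
    (m : 𝒳 → ℝ) (hm : Measurable m)
    (hmver : (fun ω => m (X ω) * p (X ω)) =ᵐ[μ]
      μ[fun ω => if S ω then ℓ (X ω) (Y ω) else 0 | MeasurableSpace.comap X inferInstance])
    (hm_int : Integrable (fun ω => m (X ω)) (μ[|{ω | S ω = false}])) :
    ∫ ω, ℓ (X ω) (Y ω) ∂(μ[|{ω | S ω = false}])
      = ∫ ω, m (X ω) ∂(μ[|{ω | S ω = false}]) :=
  target_risk_identified_under_transportability_general μ X Y S hX hY hS ℓ hℓ hW_int hCI p hpver
    hppos m hm hmver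
end

section
/- Assume positivity: p(X) > 0 μ-a.s. where p∘X is a version of E_μ[1_{S=1} | σ(X)]. Then the tilted inverse-odds weighted loss recovers the tilted g-formula functional: (1/μ(S=0)) · E_μ[ 1_{S=1} · ((1 − p(X)) · e^{η q(Y)} / (p(X) · c(X))) · W ] = E_{μ₀}[ b(X) ]. -/
/-!
Condition on `σ(X)`. Under `μ₁` the `X`-measurable weight `(1 - p(X)) / (p(X) c(X))` pulls out of
the conditional expectation, which turns `W e^{η q(Y)}` into `r(X)`. Going back from `μ₁` to `μ`
multiplies by `1_{S=1}`, whose conditional expectation is `p(X)`; it cancels the `p(X)` of the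
inverse odds and leaves `(1 - p(X)) b(X)`. Finally `1 - p(X)` is the conditional expectation of
`1_{S=0}`, so integrating against it is integrating against `μ₀`, up to the factor `μ(S=0)`.
-/

open MeasureTheory ProbabilityTheory

namespace MeasureTheory

variable {Ω : Type*} {m m₀ : MeasurableSpace Ω} {μ : Measure Ω} {f g g' : Ω → ℝ}

theorem condExp_mul_ae_eq_of_stronglyMeasurable_left (hf : StronglyMeasurable[m] f)
    (hfg : Integrable (f * g) μ) (hg : Integrable g μ) (hg' : μ[g|m] =ᵐ[μ] g') :
    μ[f * g|m] =ᵐ[μ] f * g' :=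
  (condExp_mul_of_stronglyMeasurable_left hf hfg hg).trans (Filter.EventuallyEq.rfl.mul hg')

theorem integrable_mul_of_condExp_ae_eq (hf : StronglyMeasurable[m] f)
    (hfg : Integrable (f * g) μ) (hg : Integrable g μ) (hg' : μ[g|m] =ᵐ[μ] g') :
    Integrable (f * g') μ :=
  integrable_condExp.congr (condExp_mul_ae_eq_of_stronglyMeasurable_left hf hfg hg hg')

theorem integral_mul_eq_of_condExp_ae_eq (hm : m ≤ m₀) [SigmaFinite (μ.trim hm)]
    (hf : StronglyMeasurable[m] f) (hfg : Integrable (f * g) μ) (hg : Integrable g μ)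
    (hg' : μ[g|m] =ᵐ[μ] g') : ∫ ω, f ω * g ω ∂μ = ∫ ω, f ω * g' ω ∂μ :=
  (integral_condExp hm).symm.trans
    (integral_congr_ae (condExp_mul_ae_eq_of_stronglyMeasurable_left hf hfg hg hg'))

end MeasureTheory

namespace ProbabilityTheory

variable {Ω : Type*} {m : MeasurableSpace Ω} [mΩ : MeasurableSpace Ω] {μ : Measure Ω}
  [IsFiniteMeasure μ] {s : Set Ω} {f P w F R : Ω → ℝ}

theorem integral_indicator_eq_measureReal_mul_integral_cond (hs : MeasurableSet s)
    (f : Ω → ℝ) : ∫ ω, s.indicator f ω ∂μ = μ.real s * ∫ ω, f ω ∂μ[|s] := by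
  rw [integral_indicator hs]
  by_cases hμs : μ s = 0
  · simp [Measure.restrict_eq_zero.2 hμs, cond_eq_zero_of_meas_eq_zero hμs]
  · rw [cond, integral_smul_measure, ENNReal.toReal_inv, smul_eq_mul, ← mul_assoc,
      measureReal_def, mul_inv_cancel₀ (ENNReal.toReal_ne_zero.2 ⟨hμs, measure_ne_top μ s⟩),
      one_mul]

theorem integrable_indicator_iff_integrable_cond (hs : MeasurableSet s) :
    Integrable (s.indicator f) μ ↔ Integrable f μ[|s] := by
  rw [integrable_indicator_iff hs]
  by_cases hμs : μ s = 0
  · simp [IntegrableOn, Measure.restrict_eq_zero.2 hμs, cond_eq_zero_of_meas_eq_zero hμs]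
  · rw [cond, integrable_smul_measure (ENNReal.inv_ne_zero.2 (measure_ne_top μ s))
      (ENNReal.inv_ne_top.2 hμs)]
    rfl

theorem measureReal_mul_integral_cond_eq_integral_mul (hm : m ≤ mΩ) (hs : MeasurableSet s)
    (hf : StronglyMeasurable[m] f) (hfs : Integrable f μ[|s])
    (hP : μ[s.indicator 1|m] =ᵐ[μ] P) :
    μ.real s * ∫ ω, f ω ∂μ[|s] = ∫ ω, f ω * P ω ∂μ := by
  have hindicator : s.indicator f = f * s.indicator 1 := by
    ext ω
    by_cases hω : ω ∈ s <;> simp [hω]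
  rw [← integral_indicator_eq_measureReal_mul_integral_cond hs, hindicator]
  rw [← integrable_indicator_iff_integrable_cond hs, hindicator] at hfs
  exact integral_mul_eq_of_condExp_ae_eq hm hf hfs ((integrable_const 1).indicator hs) hP

theorem condExp_indicator_compl_one_ae_eq (hm : m ≤ mΩ) (hs : MeasurableSet s)
    (hP : μ[s.indicator 1|m] =ᵐ[μ] P) : μ[sᶜ.indicator 1|m] =ᵐ[μ] 1 - P := by
  have hone : Integrable (1 : Ω → ℝ) μ := integrable_const 1
  have hconst : μ[1|m] = 1 := condExp_const hm (1 : ℝ)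
  rw [Set.indicator_compl]
  filter_upwards [condExp_sub hone (hone.indicator hs) m, hP] with ω hsub hω
  rw [hsub, Pi.sub_apply, hconst, hω]
  rfl

theorem integral_indicator_odds_mul_eq_integral_cond_compl (hm : m ≤ mΩ)
    (hs : MeasurableSet s) (hPm : Measurable[m] P) (hP : μ[s.indicator 1|m] =ᵐ[μ] P)
    (hPpos : ∀ᵐ ω ∂μ, 0 < P ω) (hwm : Measurable[m] w) (hRm : Measurable[m] R)
    (hF : Integrable F μ[|s]) (hR : μ[|s][F|m] =ᵐ[μ[|s]] R)
    (hwF : Integrable (fun ω => (1 - P ω) / P ω * w ω * F ω) μ[|s])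
    (hwR : Integrable (fun ω => w ω * R ω) μ[|sᶜ]) :
    ∫ ω, s.indicator (fun ω => (1 - P ω) / P ω * w ω * F ω) ω ∂μ
      = μ.real sᶜ * ∫ ω, w ω * R ω ∂μ[|sᶜ] := by
  have hodds : Measurable[m] fun ω => (1 - P ω) / P ω * w ω :=
    ((measurable_const.sub hPm).div hPm).mul hwm
  have hoddsR : Integrable (fun ω => (1 - P ω) / P ω * w ω * R ω) μ[|s] :=
    integrable_mul_of_condExp_ae_eq hodds.stronglyMeasurable hwF hF hR
  have hcancel : (fun ω => (1 - P ω) / P ω * w ω * R ω * P ω) =ᵐ[μ]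
      fun ω => w ω * R ω * (1 - P ω) := by
    filter_upwards [hPpos] with ω hω
    field_simp
  calc ∫ ω, s.indicator (fun ω => (1 - P ω) / P ω * w ω * F ω) ω ∂μ
      = μ.real s * ∫ ω, (1 - P ω) / P ω * w ω * F ω ∂μ[|s] :=
        integral_indicator_eq_measureReal_mul_integral_cond hs _
    _ = μ.real s * ∫ ω, (1 - P ω) / P ω * w ω * R ω ∂μ[|s] := by
        rw [integral_mul_eq_of_condExp_ae_eq hm hodds.stronglyMeasurable hwF hF hR]
    _ = ∫ ω, (1 - P ω) / P ω * w ω * R ω * P ω ∂μ :=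
        measureReal_mul_integral_cond_eq_integral_mul hm hs
          (hodds.mul hRm).stronglyMeasurable hoddsR hP
    _ = ∫ ω, w ω * R ω * (1 - P ω) ∂μ := integral_congr_ae hcancel
    _ = μ.real sᶜ * ∫ ω, w ω * R ω ∂μ[|sᶜ] :=
        (measureReal_mul_integral_cond_eq_integral_mul hm hs.compl (hwm.mul hRm).stronglyMeasurable
          hwR (condExp_indicator_compl_one_ae_eq hm hs hP)).symm

end ProbabilityTheory

theorem tilted_weighting_recovers_gformula_general
    {Ω : Type*} [MeasurableSpace Ω] {𝒳 : Type*} [MeasurableSpace 𝒳]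
    (μ : Measure Ω) [IsProbabilityMeasure μ]
    (X : Ω → 𝒳) (Y : Ω → ℝ) (S : Ω → Bool)
    (hX : Measurable X) (hS : Measurable S)
    (hS0 : 0 < μ {ω | S ω = false})
    (η : ℝ) (q : ℝ → ℝ)
    (ℓ : 𝒳 → ℝ → ℝ)
    (c r : 𝒳 → ℝ) (hc : Measurable c) (hr : Measurable r)
    (hWexp_int : Integrable (fun ω => ℓ (X ω) (Y ω) * Real.exp (η * q (Y ω)))
      (μ[|{ω | S ω = true}]))
    (hrver : (fun ω => r (X ω)) =ᵐ[μ[|{ω | S ω = true}]]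
      (μ[|{ω | S ω = true}])[fun ω => ℓ (X ω) (Y ω) * Real.exp (η * q (Y ω)) |
        MeasurableSpace.comap X inferInstance])
    -- the true propensity, with positivity
    (p : 𝒳 → ℝ) (hp : Measurable p)
    (hpver : (fun ω => p (X ω)) =ᵐ[μ]
      μ[fun ω => if S ω then (1 : ℝ) else 0 | MeasurableSpace.comap X inferInstance])
    (hppos : ∀ᵐ ω ∂μ, 0 < p (X ω))
    (hb_int₀ : Integrable (fun ω => r (X ω) / c (X ω)) (μ[|{ω | S ω = false}]))
    (hwt_int : Integrable (fun ω =>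
      if S ω then ((1 - p (X ω)) * Real.exp (η * q (Y ω)) / (p (X ω) * c (X ω)))
        * ℓ (X ω) (Y ω)
      else 0) μ) :
    (μ {ω | S ω = false}).toReal⁻¹
      * ∫ ω, (if S ω then ((1 - p (X ω)) * Real.exp (η * q (Y ω)) / (p (X ω) * c (X ω)))
            * ℓ (X ω) (Y ω)
          else 0) ∂μ
      = ∫ ω, r (X ω) / c (X ω) ∂(μ[|{ω | S ω = false}]) := by
  have hm := hX.comap_le
  have hmX {φ : 𝒳 → ℝ} (hφ : Measurable φ) :
      Measurable[MeasurableSpace.comap X inferInstance] fun ω => φ (X ω) :=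
    hφ.comp (comap_measurable X)
  set s := {ω | S ω = true}
  have hs : MeasurableSet s := hS (measurableSet_singleton true)
  have hsc : {ω | S ω = false} = sᶜ := by ext; simp [s]
  have hps : μ[s.indicator 1|MeasurableSpace.comap X inferInstance] =ᵐ[μ] fun ω => p (X ω) := by
    convert hpver.symm using 3 with ω
    by_cases hω : S ω <;> simp [s, hω]
  have hweight : ∀ ω, (if S ω then ((1 - p (X ω)) * Real.exp (η * q (Y ω)) /
      (p (X ω) * c (X ω))) * ℓ (X ω) (Y ω) else 0) = s.indicator (fun ω =>
        (1 - p (X ω)) / p (X ω) * (c (X ω))⁻¹ * (ℓ (X ω) (Y ω) * Real.exp (η * q (Y ω)))) ω := by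
    intro ω
    by_cases hω : S ω <;> simp [s, hω]
    ring
  have hb : (fun ω => r (X ω) / c (X ω)) = fun ω => (c (X ω))⁻¹ * r (X ω) := by
    ext ω
    ring
  rw [hsc, hb] at hb_int₀ ⊢
  rw [hsc] at hS0
  rw [integral_congr_ae (ae_of_all _ hweight),
    integral_indicator_odds_mul_eq_integral_cond_compl hm hs (hmX hp) hps hppos
      (w := fun ω => (c (X ω))⁻¹) (hmX hc).inv (hmX hr) hWexp_int hrver.symm
      ((integrable_indicator_iff_integrable_cond hs).1 (hwt_int.congr (ae_of_all _ hweight)))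
      hb_int₀]
  exact inv_mul_cancel_left₀ (ENNReal.toReal_pos hS0.ne' (measure_ne_top μ sᶜ)).ne' _

/-- Case 2 of the consistency proof for the augmented estimator (Theorem 1), first part:
at the true nuisance functions `p` (the propensity `E_μ[1_{S=1} | σ(X)]`, satisfying
positivity) and `c` (with `c∘X` a version of `E_{μ₁}[e^{η q(Y)} | σ(X)]`), the tilted
inverse-odds weighted loss recovers the tilted g-formula functional:
`(1/μ(S=0)) E_μ[1_{S=1} ((1 − p(X)) e^{η q(Y)} / (p(X) c(X))) W] = E_{μ₀}[b(X)]`. -/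
theorem tilted_weighting_recovers_gformula
    {Ω : Type*} [MeasurableSpace Ω] {𝒳 : Type*} [MeasurableSpace 𝒳]
    (μ : Measure Ω) [IsProbabilityMeasure μ]
    (X : Ω → 𝒳) (Y : Ω → ℝ) (S : Ω → Bool)
    (hX : Measurable X) (hY : Measurable Y) (hS : Measurable S)
    (hS1 : 0 < μ {ω | S ω = true}) (hS0 : 0 < μ {ω | S ω = false})
    (η : ℝ) (q : ℝ → ℝ) (hq : Measurable q)
    (ℓ : 𝒳 → ℝ → ℝ) (hℓ : Measurable (Function.uncurry ℓ))
    (c r : 𝒳 → ℝ) (hc : Measurable c) (hr : Measurable r)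
    (hexp_int : Integrable (fun ω => Real.exp (η * q (Y ω))) (μ[|{ω | S ω = true}]))
    (hWexp_int : Integrable (fun ω => ℓ (X ω) (Y ω) * Real.exp (η * q (Y ω)))
      (μ[|{ω | S ω = true}]))
    (hcver : (fun ω => c (X ω)) =ᵐ[μ[|{ω | S ω = true}]]
      (μ[|{ω | S ω = true}])[fun ω => Real.exp (η * q (Y ω)) |
        MeasurableSpace.comap X inferInstance])
    (hcpos : ∀ᵐ ω ∂(μ[|{ω | S ω = true}]), 0 < c (X ω))
    (hrver : (fun ω => r (X ω)) =ᵐ[μ[|{ω | S ω = true}]]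
      (μ[|{ω | S ω = true}])[fun ω => ℓ (X ω) (Y ω) * Real.exp (η * q (Y ω)) |
        MeasurableSpace.comap X inferInstance])
    -- the true propensity, with positivity
    (p : 𝒳 → ℝ) (hp : Measurable p)
    (hpver : (fun ω => p (X ω)) =ᵐ[μ]
      μ[fun ω => if S ω then (1 : ℝ) else 0 | MeasurableSpace.comap X inferInstance])
    (hppos : ∀ᵐ ω ∂μ, 0 < p (X ω))
    (hb_int₀ : Integrable (fun ω => r (X ω) / c (X ω)) (μ[|{ω | S ω = false}]))
    (hwt_int : Integrable (fun ω =>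
      if S ω then ((1 - p (X ω)) * Real.exp (η * q (Y ω)) / (p (X ω) * c (X ω)))
        * ℓ (X ω) (Y ω)
      else 0) μ) :
    (μ {ω | S ω = false}).toReal⁻¹
      * ∫ ω, (if S ω then ((1 - p (X ω)) * Real.exp (η * q (Y ω)) / (p (X ω) * c (X ω)))
            * ℓ (X ω) (Y ω)
          else 0) ∂μ
      = ∫ ω, r (X ω) / c (X ω) ∂(μ[|{ω | S ω = false}]) :=
  tilted_weighting_recovers_gformula_general μ X Y S hX hS hS0 η q ℓ c r hc hr hWexp_int hrver p hp
    hpver hppos hb_int₀ hwt_int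
end

section
/- Assume positivity: p(X) > 0 μ-a.s. where p∘X is a version of E_μ[1_{S=1} | σ(X)]. Then for every measurable b* : 𝒳 → ℝ making the displayed integrands μ-integrable: E_μ[ 1_{S=1} · ((1 − p(X)) · e^{η q(Y)} / (p(X) · c(X))) · b*(X) ] = E_μ[ 1_{S=0} · b*(X) ]. -/
/-!
Under the source population `μ(·|S=1)`, conditioning on `X` replaces `e^{η q(Y)}` by `c(X)`, so
on `{S=1}` the tilted weight times `b*(X)` integrates like `(1 - p(X)) / p(X) · b*(X)`. Under `μ`,
conditioning on `X` replaces `1_{S=1}` by `p(X)` and `1_{S=0}` by `1 - p(X)`; hence both sides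
equal `E_μ[(1 - p(X)) b*(X)]`.
-/

open MeasureTheory ProbabilityTheory Real

section PullOut

variable {Ω : Type*} {m m₀ : MeasurableSpace Ω} {μ : Measure Ω} {f g φ : Ω → ℝ}

theorem mul_ae_eq_condExp_mul_of_ae_eq_condExp (hg : StronglyMeasurable[m] g)
    (hf : Integrable f μ) (hgf : Integrable (g * f) μ) (hφ : φ =ᵐ[μ] μ[f | m]) :
    g * φ =ᵐ[μ] μ[g * f | m] :=
  ((condExp_mul_of_stronglyMeasurable_left hg hgf hf).trans hφ.symm.mul_left).symm

theorem integrable_mul_of_ae_eq_condExp (hg : StronglyMeasurable[m] g)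
    (hf : Integrable f μ) (hgf : Integrable (g * f) μ) (hφ : φ =ᵐ[μ] μ[f | m]) :
    Integrable (g * φ) μ :=
  integrable_condExp.congr (mul_ae_eq_condExp_mul_of_ae_eq_condExp hg hf hgf hφ).symm

theorem integral_mul_eq_of_ae_eq_condExp (hm : m ≤ m₀) [SigmaFinite (μ.trim hm)]
    (hg : StronglyMeasurable[m] g) (hf : Integrable f μ) (hgf : Integrable (g * f) μ)
    (hφ : φ =ᵐ[μ] μ[f | m]) :
    ∫ x, g x * f x ∂μ = ∫ x, g x * φ x ∂μ := by
  rw [← integral_condExp hm]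
  exact integral_congr_ae (mul_ae_eq_condExp_mul_of_ae_eq_condExp hg hf hgf hφ).symm

theorem one_sub_ae_eq_condExp_one_sub (hm : m ≤ m₀) [IsFiniteMeasure μ] (hf : Integrable f μ)
    (hφ : φ =ᵐ[μ] μ[f | m]) :
    (fun x => 1 - φ x) =ᵐ[μ] μ[fun x => 1 - f x | m] := by
  have hsub := condExp_sub (integrable_const (1 : ℝ)) hf m
  rw [condExp_const hm] at hsub
  filter_upwards [hsub, hφ] with x hx hφx
  rw [hφx]
  exact hx.symm

variable [IsFiniteMeasure μ] {s : Set Ω}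

theorem setIntegral_eq_integral_mul_of_ae_eq_condExp_indicator (hm : m ≤ m₀)
    (hs : MeasurableSet s) (hg : StronglyMeasurable[m] g) (hgs : IntegrableOn g s μ)
    (hφ : φ =ᵐ[μ] μ[s.indicator 1 | m]) :
    ∫ x in s, g x ∂μ = ∫ x, g x * φ x ∂μ := by
  have hind : g * s.indicator 1 = s.indicator g := by
    ext x
    by_cases hx : x ∈ s <;> simp [hx]
  have hgind : Integrable (g * s.indicator 1) μ := by
    rwa [hind, integrable_indicator_iff hs]
  rw [← integral_indicator hs, ← hind]
  exact integral_mul_eq_of_ae_eq_condExp hm hg ((integrable_const 1).indicator hs) hgind hφ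

theorem setIntegral_compl_eq_integral_mul_one_sub_of_ae_eq_condExp_indicator (hm : m ≤ m₀)
    (hs : MeasurableSet s) (hg : StronglyMeasurable[m] g) (hgs : IntegrableOn g sᶜ μ)
    (hφ : φ =ᵐ[μ] μ[s.indicator 1 | m]) :
    ∫ x in sᶜ, g x ∂μ = ∫ x, g x * (1 - φ x) ∂μ := by
  refine setIntegral_eq_integral_mul_of_ae_eq_condExp_indicator hm hs.compl hg hgs ?_
  rw [Set.indicator_compl]
  exact one_sub_ae_eq_condExp_one_sub hm ((integrable_const 1).indicator hs) hφ

end PullOut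

section Cond

variable {Ω : Type*} {m m₀ : MeasurableSpace Ω} {μ : Measure Ω} {s : Set Ω} {f g φ : Ω → ℝ}

theorem restrict_absolutelyContinuous_cond (hμs : μ s ≠ ⊤) : μ.restrict s ≪ μ[|s] :=
  Measure.absolutelyContinuous_smul (ENNReal.inv_ne_zero.2 hμs)

theorem integrable_cond_iff (hμs₀ : μ s ≠ 0) (hμs : μ s ≠ ⊤) :
    Integrable f μ[|s] ↔ IntegrableOn f s μ :=
  integrable_smul_measure (ENNReal.inv_ne_zero.2 hμs) (ENNReal.inv_ne_top.2 hμs₀)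

theorem integral_cond_s11 (f : Ω → ℝ) : ∫ x, f x ∂μ[|s] = (μ s).toReal⁻¹ * ∫ x in s, f x ∂μ := by
  rw [ProbabilityTheory.cond, integral_smul_measure, ENNReal.toReal_inv, smul_eq_mul]

variable [IsFiniteMeasure μ]

theorem integrableOn_mul_of_ae_eq_condExp_cond (hμs : μ s ≠ 0) (hg : StronglyMeasurable[m] g)
    (hf : Integrable f μ[|s]) (hgf : IntegrableOn (g * f) s μ)
    (hφ : φ =ᵐ[μ[|s]] μ[|s][f | m]) :
    IntegrableOn (g * φ) s μ :=
  (integrable_cond_iff hμs (measure_ne_top μ s)).1 <| integrable_mul_of_ae_eq_condExp hg hf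
    ((integrable_cond_iff hμs (measure_ne_top μ s)).2 hgf) hφ

theorem setIntegral_mul_eq_of_ae_eq_condExp_cond (hm : m ≤ m₀) (hμs : μ s ≠ 0)
    (hg : StronglyMeasurable[m] g) (hf : Integrable f μ[|s]) (hgf : IntegrableOn (g * f) s μ)
    (hφ : φ =ᵐ[μ[|s]] μ[|s][f | m]) :
    ∫ x in s, g x * f x ∂μ = ∫ x in s, g x * φ x ∂μ := by
  have h := integral_mul_eq_of_ae_eq_condExp hm hg hf
    ((integrable_cond_iff hμs (measure_ne_top μ s)).2 hgf) hφ
  rw [integral_cond_s11, integral_cond_s11] at h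
  exact mul_left_cancel₀ (inv_ne_zero (ENNReal.toReal_ne_zero.2 ⟨hμs, measure_ne_top μ s⟩)) h

end Cond

section Bool

variable {Ω : Type*} (S : Ω → Bool) (F : Ω → ℝ)

theorem ite_eq_indicator_setOf :
    (fun ω => if S ω then F ω else 0) = {ω | S ω = true}.indicator F := by
  ext ω
  simp [Set.indicator_apply]

theorem ite_zero_left_eq_indicator_compl_setOf :
    (fun ω => if S ω then 0 else F ω) = {ω | S ω = true}ᶜ.indicator F := by
  ext ω
  by_cases hω : S ω <;> simp [hω]

end Bool

theorem tilted_weights_transport_covariate_functions_general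
    {Ω : Type*} [MeasurableSpace Ω] {𝒳 : Type*} [MeasurableSpace 𝒳]
    (μ : Measure Ω) [IsProbabilityMeasure μ]
    (X : Ω → 𝒳) (Y : Ω → ℝ) (S : Ω → Bool)
    (hX : Measurable X) (hS : Measurable S)
    (hS1 : 0 < μ {ω | S ω = true})
    (η : ℝ) (q : ℝ → ℝ)
    (c : 𝒳 → ℝ) (hc : Measurable c)
    (hexp_int : Integrable (fun ω => Real.exp (η * q (Y ω))) (μ[|{ω | S ω = true}]))
    (hcver : (fun ω => c (X ω)) =ᵐ[μ[|{ω | S ω = true}]]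
      (μ[|{ω | S ω = true}])[fun ω => Real.exp (η * q (Y ω)) |
        MeasurableSpace.comap X inferInstance])
    (hcpos : ∀ᵐ ω ∂(μ[|{ω | S ω = true}]), 0 < c (X ω))
    -- the true propensity, with positivity
    (p : 𝒳 → ℝ) (hp : Measurable p)
    (hpver : (fun ω => p (X ω)) =ᵐ[μ]
      μ[fun ω => if S ω then (1 : ℝ) else 0 | MeasurableSpace.comap X inferInstance])
    (hppos : ∀ᵐ ω ∂μ, 0 < p (X ω))
    -- an arbitrary measurable covariate function b*
    (bstar : 𝒳 → ℝ) (hbstar : Measurable bstar)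
    (hwt_int : Integrable (fun ω =>
      if S ω then ((1 - p (X ω)) * Real.exp (η * q (Y ω)) / (p (X ω) * c (X ω)))
        * bstar (X ω)
      else 0) μ)
    (hbstar_int : Integrable (fun ω => if S ω then 0 else bstar (X ω)) μ) :
    ∫ ω, (if S ω then ((1 - p (X ω)) * Real.exp (η * q (Y ω)) / (p (X ω) * c (X ω)))
          * bstar (X ω)
        else 0) ∂μ
      = ∫ ω, (if S ω then 0 else bstar (X ω)) ∂μ := by
  set s := {ω | S ω = true}
  set w : Ω → ℝ := fun ω => (1 - p (X ω)) / (p (X ω) * c (X ω)) * bstar (X ω)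
  set h : Ω → ℝ := fun ω => (1 - p (X ω)) / p (X ω) * bstar (X ω)
  have hs : MeasurableSet s := hS (measurableSet_singleton true)
  have hm : MeasurableSpace.comap X inferInstance ≤ _ := hX.comap_le
  have hXm := comap_measurable (m := (inferInstance : MeasurableSpace 𝒳)) X
  have hwm : StronglyMeasurable[MeasurableSpace.comap X inferInstance] w :=
    (by fun_prop : Measurable[MeasurableSpace.comap X inferInstance] w).stronglyMeasurable
  have hhm : StronglyMeasurable[MeasurableSpace.comap X inferInstance] h :=
    (by fun_prop : Measurable[MeasurableSpace.comap X inferInstance] h).stronglyMeasurable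
  have hwt : (fun ω => if S ω then ((1 - p (X ω)) * Real.exp (η * q (Y ω)) /
      (p (X ω) * c (X ω))) * bstar (X ω) else 0) =
        s.indicator (w * fun ω => exp (η * q (Y ω))) := by
    rw [← ite_eq_indicator_setOf]
    ext ω
    split_ifs
    · simp only [Pi.mul_apply, w]
      ring
    · rfl
  have hwe : IntegrableOn (w * fun ω => exp (η * q (Y ω))) s μ := by
    rwa [← integrable_indicator_iff hs, ← hwt]
  have hwc : ∀ᵐ ω ∂μ.restrict s, w ω * c (X ω) = h ω := by
    filter_upwards [restrict_absolutelyContinuous_cond (measure_ne_top μ s) hcpos,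
      ae_restrict_of_ae hppos] with ω hcω hpω
    simp only [w, h]
    field_simp
  have hh : IntegrableOn h s μ :=
    (integrableOn_mul_of_ae_eq_condExp_cond hS1.ne' hwm hexp_int hwe hcver).congr hwc
  rw [ite_eq_indicator_setOf S fun _ => 1] at hpver
  calc _ = ∫ ω in s, w ω * exp (η * q (Y ω)) ∂μ := by rw [hwt, integral_indicator hs]; rfl
    _ = ∫ ω in s, w ω * c (X ω) ∂μ :=
      setIntegral_mul_eq_of_ae_eq_condExp_cond hm hS1.ne' hwm hexp_int hwe hcver
    _ = ∫ ω in s, h ω ∂μ := integral_congr_ae hwc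
    _ = ∫ ω, h ω * p (X ω) ∂μ :=
      setIntegral_eq_integral_mul_of_ae_eq_condExp_indicator hm hs hhm hh hpver
    _ = ∫ ω, bstar (X ω) * (1 - p (X ω)) ∂μ := by
      refine integral_congr_ae ?_
      filter_upwards [hppos] with ω hpω
      simp only [h]
      field_simp
    _ = ∫ ω in sᶜ, bstar (X ω) ∂μ :=
      (setIntegral_compl_eq_integral_mul_one_sub_of_ae_eq_condExp_indicator hm hs
        (hbstar.comp hXm).stronglyMeasurable
        (by rwa [← integrable_indicator_iff hs.compl, ← ite_zero_left_eq_indicator_compl_setOf])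
        hpver).symm
    _ = _ := by rw [ite_zero_left_eq_indicator_compl_setOf, integral_indicator hs.compl]

/-- Case 2 of the consistency proof for the augmented estimator (Theorem 1), second part:
the true-nuisance tilted weights transport any covariate function `b*` from the source
population to the target population:
`E_μ[1_{S=1} ((1 − p(X)) e^{η q(Y)} / (p(X) c(X))) b*(X)] = E_μ[1_{S=0} b*(X)]`. -/
theorem tilted_weights_transport_covariate_functions
    {Ω : Type*} [MeasurableSpace Ω] {𝒳 : Type*} [MeasurableSpace 𝒳]
    (μ : Measure Ω) [IsProbabilityMeasure μ]
    (X : Ω → 𝒳) (Y : Ω → ℝ) (S : Ω → Bool)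
    (hX : Measurable X) (hY : Measurable Y) (hS : Measurable S)
    (hS1 : 0 < μ {ω | S ω = true}) (hS0 : 0 < μ {ω | S ω = false})
    (η : ℝ) (q : ℝ → ℝ) (hq : Measurable q)
    (c : 𝒳 → ℝ) (hc : Measurable c)
    (hexp_int : Integrable (fun ω => Real.exp (η * q (Y ω))) (μ[|{ω | S ω = true}]))
    (hcver : (fun ω => c (X ω)) =ᵐ[μ[|{ω | S ω = true}]]
      (μ[|{ω | S ω = true}])[fun ω => Real.exp (η * q (Y ω)) |
        MeasurableSpace.comap X inferInstance])
    (hcpos : ∀ᵐ ω ∂(μ[|{ω | S ω = true}]), 0 < c (X ω))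
    -- the true propensity, with positivity
    (p : 𝒳 → ℝ) (hp : Measurable p)
    (hpver : (fun ω => p (X ω)) =ᵐ[μ]
      μ[fun ω => if S ω then (1 : ℝ) else 0 | MeasurableSpace.comap X inferInstance])
    (hppos : ∀ᵐ ω ∂μ, 0 < p (X ω))
    -- an arbitrary measurable covariate function b*
    (bstar : 𝒳 → ℝ) (hbstar : Measurable bstar)
    (hwt_int : Integrable (fun ω =>
      if S ω then ((1 - p (X ω)) * Real.exp (η * q (Y ω)) / (p (X ω) * c (X ω)))
        * bstar (X ω)
      else 0) μ)
    (hbstar_int : Integrable (fun ω => if S ω then 0 else bstar (X ω)) μ) :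
    ∫ ω, (if S ω then ((1 - p (X ω)) * Real.exp (η * q (Y ω)) / (p (X ω) * c (X ω)))
          * bstar (X ω)
        else 0) ∂μ
      = ∫ ω, (if S ω then 0 else bstar (X ω)) ∂μ :=
  tilted_weights_transport_covariate_functions_general μ X Y S hX hS hS1 η q c hc hexp_int hcver
    hcpos p hp hpver hppos bstar hbstar hwt_int hbstar_int
end

section
/- Let Y take values in {0,1}, let q be the identity, and let g : 𝒳 → (0,1) be measurable with g∘X a version of E_{μ₁}[Y | σ(X)] (the true outcome model P[Y=1 | X, S=1]). Define b(x) = (ℓ(x,1) e^{η} g(x) + ℓ(x,0)(1 − g(x))) / (e^{η} g(x) + 1 − g(x)). Then for every measurable p* : 𝒳 → ℝ with 0 < p*(X) ≤ 1 μ-a.s. (whether or not p* equals the true propensity P[S=1|X]), (1/μ(S=0)) · E_μ[ 1_{S=0} · b(X) + 1_{S=1} · ((1 − p*(X)) e^{η Y} / (p*(X) · (e^{η} g(X) + 1 − g(X)))) · (ℓ(X,Y) − b(X)) ] = E_{μ₀}[ b(X) ], i.e. the population augmented functional with a correctly specified outcome model equals the identified target-population risk φ(η) regardless of the propensity model. 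-/
open MeasureTheory ProbabilityTheory Real

/-!
`b(x)` is the mean of `ℓ(x, Y)` under the `e^{ηY}`-tilt of `Bernoulli(g(x))`, so the tilted
residual `e^{ηy} (ℓ(x, y) - b(x))` has `Bernoulli(g(x))`-mean zero; being a function of a binary
`y`, it is then a multiple `c(x) (y - g(x))`. Hence on `{S = 1}` the augmented integrand is
`φ(X) (Y - g(X))` for a `σ(X)`-measurable weight `φ` (the only place `p*` enters), which
integrates to zero under `μ₁` because `g(X) = E_{μ₁}[Y | X]`. Only the `{S = 0}` term survives.
-/

section

variable {Ω : Type*} [MeasurableSpace Ω] {μ : Measure Ω} {s : Set Ω} {f : Ω → ℝ}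

theorem integral_cond_eq_inv_mul_setIntegral :
    ∫ ω, f ω ∂μ[|s] = (μ s).toReal⁻¹ * ∫ ω in s, f ω ∂μ := by
  rw [ProbabilityTheory.cond, integral_smul_measure, smul_eq_mul, ENNReal.toReal_inv]

theorem IntegrableOn.integrable_cond (hf : IntegrableOn f s μ) : Integrable f μ[|s] := by
  rcases eq_or_ne (μ s) 0 with hμs | hμs
  · rw [cond_eq_zero_of_meas_eq_zero hμs]
    exact integrable_zero_measure
  · exact hf.smul_measure (ENNReal.inv_ne_top.mpr hμs)

theorem integral_ite_eq_setIntegral_of_setIntegral_eq_zero {S : Ω → Bool} (hS : Measurable S)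
    {f h : Ω → ℝ} (hint : Integrable (fun ω => if S ω then f ω else h ω) μ)
    (hf : ∫ ω in {ω | S ω = true}, f ω ∂μ = 0) :
    ∫ ω, (if S ω then f ω else h ω) ∂μ = ∫ ω in {ω | S ω = false}, h ω ∂μ := by
  have hT : MeasurableSet {ω | S ω = true} := hS (measurableSet_singleton true)
  have hTc : {ω | S ω = true}ᶜ = {ω | S ω = false} := by ext; simp
  rw [← integral_add_compl hT hint,
    setIntegral_congr_fun hT fun ω (hω : S ω = true) => if_pos hω, hf, zero_add, hTc]
  exact setIntegral_congr_fun (hS (measurableSet_singleton false))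
    fun ω (hω : S ω = false) => by simp [hω]

theorem setIntegral_eq_zero_of_integral_cond_eq_zero [IsFiniteMeasure μ]
    (hf : ∫ ω, f ω ∂μ[|s] = 0) : ∫ ω in s, f ω ∂μ = 0 := by
  rcases eq_or_ne (μ s) 0 with hμs | hμs
  · rw [Measure.restrict_eq_zero.mpr hμs, integral_zero_measure]
  · rw [integral_cond_eq_inv_mul_setIntegral] at hf
    have hμs' : (μ s).toReal ≠ 0 := ENNReal.toReal_ne_zero.mpr ⟨hμs, measure_ne_top μ s⟩
    exact (mul_eq_zero.mp hf).resolve_left (inv_ne_zero hμs')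

end

theorem integral_mul_sub_eq_zero_of_ae_eq_condExp {Ω : Type*} {m m₀ : MeasurableSpace Ω}
    {μ : Measure Ω} [IsFiniteMeasure μ] (hm : m ≤ m₀) {φ Y Z : Ω → ℝ}
    (hφ : StronglyMeasurable[m] φ) (hY : Integrable Y μ) (hZ : Z =ᵐ[μ] μ[Y | m])
    (hφYZ : Integrable (φ * (Y - Z)) μ) :
    ∫ ω, φ ω * (Y ω - Z ω) ∂μ = 0 := by
  have hZint : Integrable Z μ := integrable_condExp.congr hZ.symm
  have hcondExpZ : μ[Z | m] =ᵐ[μ] μ[Y | m] :=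
    (condExp_congr_ae hZ).trans (condExp_condExp_of_le le_rfl hm)
  have hresidual : μ[Y - Z | m] =ᵐ[μ] 0 := by
    filter_upwards [condExp_sub hY hZint m, hcondExpZ] with ω hsub hZω
    simp [hsub, hZω]
  calc ∫ ω, φ ω * (Y ω - Z ω) ∂μ
      = ∫ ω, μ[φ * (Y - Z) | m] ω ∂μ := (integral_condExp hm).symm
    _ = ∫ ω, (φ * μ[Y - Z | m]) ω ∂μ :=
      integral_congr_ae (condExp_mul_of_stronglyMeasurable_left hφ hφYZ (hY.sub hZint))
    _ = ∫ _, (0 : ℝ) ∂μ := integral_congr_ae (hresidual.mono fun ω hω => by simp [hω])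
    _ = 0 := integral_zero _ _

theorem weighted_tilted_residual_eq_mul_sub {η g b y : ℝ} {l : ℝ → ℝ} (p : ℝ)
    (hD : exp η * g + (1 - g) ≠ 0)
    (hb : b = (l 1 * exp η * g + l 0 * (1 - g)) / (exp η * g + (1 - g)))
    (hy : y = 0 ∨ y = 1) :
    (1 - p) * exp (η * y) / (p * (exp η * g + (1 - g))) * (l y - b)
      = (1 - p) / (p * (exp η * g + (1 - g))) * (exp η * (l 1 - b) - (l 0 - b)) * (y - g) := by
  have htilt : exp η * g * (l 1 - b) + (1 - g) * (l 0 - b) = 0 := by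
    rw [hb]; field_simp; ring
  rcases hy with rfl | rfl <;> simp only [mul_zero, mul_one, exp_zero] <;>
    linear_combination (1 - p) / (p * (exp η * g + (1 - g))) * htilt

theorem augmented_functional_robust_to_propensity_binary_general
    {Ω : Type*} [MeasurableSpace Ω] {𝒳 : Type*} [MeasurableSpace 𝒳]
    (μ : Measure Ω) [IsProbabilityMeasure μ]
    (X : Ω → 𝒳) (Y : Ω → ℝ) (S : Ω → Bool)
    (hX : Measurable X) (hY : Measurable Y) (hS : Measurable S)
    (hY01 : ∀ ω, Y ω = 0 ∨ Y ω = 1)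
    (η : ℝ)
    (ℓ : 𝒳 → ℝ → ℝ) (hℓ : Measurable (Function.uncurry ℓ))
    -- correctly specified outcome model: g∘X is a version of E_{μ₁}[Y | σ(X)]
    (g : 𝒳 → ℝ) (hg : Measurable g) (hg01 : ∀ x, 0 < g x ∧ g x < 1)
    (hgver : (fun ω => g (X ω)) =ᵐ[μ[|{ω | S ω = true}]]
      (μ[|{ω | S ω = true}])[Y | MeasurableSpace.comap X inferInstance])
    -- the induced tilted conditional loss b
    (b : 𝒳 → ℝ)
    (hb : ∀ x, b x = (ℓ x 1 * Real.exp η * g x + ℓ x 0 * (1 - g x))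
      / (Real.exp η * g x + (1 - g x)))
    -- arbitrary (possibly misspecified) propensity model p*
    (pstar : 𝒳 → ℝ) (hpstar : Measurable pstar)
    (hintegrand : Integrable (fun ω =>
      if S ω then
        ((1 - pstar (X ω)) * Real.exp (η * Y ω)
          / (pstar (X ω) * (Real.exp η * g (X ω) + (1 - g (X ω)))))
          * (ℓ (X ω) (Y ω) - b (X ω))
      else b (X ω)) μ) :
    (μ {ω | S ω = false}).toReal⁻¹
      * ∫ ω, (if S ω then
            ((1 - pstar (X ω)) * Real.exp (η * Y ω)
              / (pstar (X ω) * (Real.exp η * g (X ω) + (1 - g (X ω)))))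
              * (ℓ (X ω) (Y ω) - b (X ω))
          else b (X ω)) ∂μ
      = ∫ ω, b (X ω) ∂(μ[|{ω | S ω = false}]) := by
  have hD : ∀ x, exp η * g x + (1 - g x) ≠ 0 := fun x =>
    (add_pos (mul_pos (exp_pos η) (hg01 x).1) (sub_pos.mpr (hg01 x).2)).ne'
  have hfactor := fun ω =>
    weighted_tilted_residual_eq_mul_sub (pstar (X ω)) (hD (X ω)) (hb (X ω)) (hY01 ω)
  simp only [hfactor] at hintegrand ⊢
  have hℓ₀ := hℓ.of_uncurry_right (y := 0)
  have hℓ₁ := hℓ.of_uncurry_right (y := 1)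
  have hbm : Measurable b := by rw [funext hb]; fun_prop
  have hc : Measurable fun x => (1 - pstar x) / (pstar x * (exp η * g x + (1 - g x)))
      * (exp η * (ℓ x 1 - b x) - (ℓ x 0 - b x)) := by fun_prop
  have hT : MeasurableSet {ω | S ω = true} := hS (measurableSet_singleton true)
  have hYint : Integrable Y μ[|{ω | S ω = true}] := .of_bound hY.aestronglyMeasurable 1
    (ae_of_all _ fun ω => by rcases hY01 ω with h | h <;> simp [h])
  rw [integral_cond_eq_inv_mul_setIntegral,
    integral_ite_eq_setIntegral_of_setIntegral_eq_zero hS hintegrand]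
  exact setIntegral_eq_zero_of_integral_cond_eq_zero <|
    integral_mul_sub_eq_zero_of_ae_eq_condExp hX.comap_le
      (hc.comp (comap_measurable X)).stronglyMeasurable hYint hgver
      (IntegrableOn.integrable_cond <| hintegrand.integrableOn.congr_fun
        (fun ω (hω : S ω = true) => if_pos hω) hT)

/-- Population content of Theorem 2 (binary outcome): with a correctly specified outcome
model `g` (a version of `P[Y = 1 | X, S = 1]` with values in `(0,1)`), the augmented
functional equals the identified target-population risk `E_{μ₀}[b(X)]` for *every*
propensity model `p*` with `0 < p*(X) ≤ 1` a.s., whether or not `p*` equals the true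
propensity `P[S=1|X]`. Here `q` is the identity and
`b(x) = (ℓ(x,1) e^η g(x) + ℓ(x,0)(1 − g(x))) / (e^η g(x) + 1 − g(x))`. -/
theorem augmented_functional_robust_to_propensity_binary
    {Ω : Type*} [MeasurableSpace Ω] {𝒳 : Type*} [MeasurableSpace 𝒳]
    (μ : Measure Ω) [IsProbabilityMeasure μ]
    (X : Ω → 𝒳) (Y : Ω → ℝ) (S : Ω → Bool)
    (hX : Measurable X) (hY : Measurable Y) (hS : Measurable S)
    (hY01 : ∀ ω, Y ω = 0 ∨ Y ω = 1)
    (hS1 : 0 < μ {ω | S ω = true}) (hS0 : 0 < μ {ω | S ω = false})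
    (η : ℝ)
    (ℓ : 𝒳 → ℝ → ℝ) (hℓ : Measurable (Function.uncurry ℓ))
    -- correctly specified outcome model: g∘X is a version of E_{μ₁}[Y | σ(X)]
    (g : 𝒳 → ℝ) (hg : Measurable g) (hg01 : ∀ x, 0 < g x ∧ g x < 1)
    (hgver : (fun ω => g (X ω)) =ᵐ[μ[|{ω | S ω = true}]]
      (μ[|{ω | S ω = true}])[Y | MeasurableSpace.comap X inferInstance])
    -- the induced tilted conditional loss b
    (b : 𝒳 → ℝ)
    (hb : ∀ x, b x = (ℓ x 1 * Real.exp η * g x + ℓ x 0 * (1 - g x))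
      / (Real.exp η * g x + (1 - g x)))
    -- arbitrary (possibly misspecified) propensity model p*
    (pstar : 𝒳 → ℝ) (hpstar : Measurable pstar)
    (hpstar01 : ∀ᵐ ω ∂μ, 0 < pstar (X ω) ∧ pstar (X ω) ≤ 1)
    (hW_int₁ : Integrable (fun ω => ℓ (X ω) (Y ω)) (μ[|{ω | S ω = true}]))
    (hWexp_int₁ : Integrable (fun ω => ℓ (X ω) (Y ω) * Real.exp (η * Y ω))
      (μ[|{ω | S ω = true}]))
    (hb_int₀ : Integrable (fun ω => b (X ω)) (μ[|{ω | S ω = false}]))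
    (hintegrand : Integrable (fun ω =>
      if S ω then
        ((1 - pstar (X ω)) * Real.exp (η * Y ω)
          / (pstar (X ω) * (Real.exp η * g (X ω) + (1 - g (X ω)))))
          * (ℓ (X ω) (Y ω) - b (X ω))
      else b (X ω)) μ) :
    (μ {ω | S ω = false}).toReal⁻¹
      * ∫ ω, (if S ω then
            ((1 - pstar (X ω)) * Real.exp (η * Y ω)
              / (pstar (X ω) * (Real.exp η * g (X ω) + (1 - g (X ω)))))
              * (ℓ (X ω) (Y ω) - b (X ω))
          else b (X ω)) ∂μ
      = ∫ ω, b (X ω) ∂(μ[|{ω | S ω = false}]) :=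
  augmented_functional_robust_to_propensity_binary_general μ X Y S hX hY hS hY01 η ℓ hℓ g hg hg01
    hgver b hb pstar hpstar hintegrand
end

section
/- For every measurable a* : 𝒳 → ℝ making the displayed integrand μ-integrable, the alternative-parameterization augmentation term has mean zero when b is the true tilted conditional loss: E_μ[ 1_{S=1} · e^{a*(X) + η q(Y)} · (W − b(X)) ] = 0. -/
/-!
On `{S = 1}` write `e = exp (η q(Y))`. The defining properties of `c` and `r` say that
`b(X) E[e | X] = E[W e | X]`, so the tilted residual `(W - b(X)) e` has conditional mean zero
given `X`, and the `X`-measurable factor `exp (a*(X))` pulls out of the conditional expectation.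
The one subtlety is the integrability of `b(X) e`. It follows from that of `b(X) c(X) = r(X)`,
because for `e ≥ 0` the pull-out identity `∫⁻ |g| e = ∫⁻ |g| E[e | X]` holds in `ℝ≥0∞` without
any integrability assumption on `g`.
-/

open MeasureTheory ProbabilityTheory
open scoped ENNReal

namespace MeasureTheory

variable {Ω : Type*} {m m₀ : MeasurableSpace Ω} {μ : Measure Ω}

theorem lintegral_ofReal_condExp_mul (hm : m ≤ m₀) [SigmaFinite (μ.trim hm)] {f : Ω → ℝ}
    (hf : Integrable f μ) (hf0 : 0 ≤ᵐ[μ] f) {g : Ω → ℝ≥0∞} (hg : Measurable[m] g) :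
    ∫⁻ ω, ENNReal.ofReal (μ[f|m] ω) * g ω ∂μ = ∫⁻ ω, ENNReal.ofReal (f ω) * g ω ∂μ := by
  -- the two densities define the same measure on `m`, and `g` is `m`-measurable
  have htrim : (μ.withDensity fun ω ↦ ENNReal.ofReal (μ[f|m] ω)).trim hm
      = (μ.withDensity fun ω ↦ ENNReal.ofReal (f ω)).trim hm := by
    refine @Measure.ext _ m _ _ fun s hs ↦ ?_
    rw [trim_measurableSet_eq hm hs, trim_measurableSet_eq hm hs,
      withDensity_apply _ (hm s hs), withDensity_apply _ (hm s hs),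
      ← ofReal_integral_eq_lintegral_ofReal integrable_condExp.integrableOn
        (ae_restrict_of_ae (condExp_nonneg hf0)),
      ← ofReal_integral_eq_lintegral_ofReal hf.integrableOn (ae_restrict_of_ae hf0),
      setIntegral_condExp hm hf hs]
  have hg₀ : AEMeasurable g μ := (hg.mono hm le_rfl).aemeasurable
  calc ∫⁻ ω, ENNReal.ofReal (μ[f|m] ω) * g ω ∂μ
      = ∫⁻ ω, g ω ∂(μ.withDensity fun ω ↦ ENNReal.ofReal (μ[f|m] ω)) :=
        (lintegral_withDensity_eq_lintegral_mul₀
          integrable_condExp.1.aemeasurable.ennreal_ofReal hg₀).symm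
    _ = ∫⁻ ω, g ω ∂(μ.withDensity fun ω ↦ ENNReal.ofReal (f ω)) := by
        rw [← lintegral_trim hm hg, htrim, lintegral_trim hm hg]
    _ = ∫⁻ ω, ENNReal.ofReal (f ω) * g ω ∂μ :=
        lintegral_withDensity_eq_lintegral_mul₀ hf.1.aemeasurable.ennreal_ofReal hg₀

theorem Integrable.mul_of_integrable_mul_condExp (hm : m ≤ m₀) [SigmaFinite (μ.trim hm)]
    {f g : Ω → ℝ} (hf : Integrable f μ) (hf0 : 0 ≤ᵐ[μ] f) (hg : StronglyMeasurable[m] g)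
    (hgf : Integrable (g * μ[f|m]) μ) : Integrable (g * f) μ := by
  refine ⟨(hg.mono hm).aestronglyMeasurable.mul hf.1, ?_⟩
  have hgₑ : Measurable[m] fun ω ↦ ‖g ω‖ₑ := hg.enorm
  calc ∫⁻ ω, ‖(g * f) ω‖ₑ ∂μ = ∫⁻ ω, ENNReal.ofReal (f ω) * ‖g ω‖ₑ ∂μ := by
        refine lintegral_congr_ae ?_
        filter_upwards [hf0] with ω hω
        rw [Pi.mul_apply, enorm_mul, Real.enorm_eq_ofReal hω, mul_comm]
    _ = ∫⁻ ω, ‖(g * μ[f|m]) ω‖ₑ ∂μ := by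
        rw [← lintegral_ofReal_condExp_mul hm hf hf0 hgₑ]
        refine lintegral_congr_ae ?_
        filter_upwards [condExp_nonneg hf0 (m := m)] with ω hω
        rw [Pi.mul_apply, enorm_mul, Real.enorm_eq_ofReal hω, mul_comm]
    _ < ∞ := hgf.2

theorem integral_mul_eq_zero_of_condExp_eq_zero (hm : m ≤ m₀) [SigmaFinite (μ.trim hm)]
    {g Z : Ω → ℝ} (hg : StronglyMeasurable[m] g) (hgZ : Integrable (g * Z) μ)
    (hZ : Integrable Z μ) (hZ0 : μ[Z|m] =ᵐ[μ] 0) : ∫ ω, (g * Z) ω ∂μ = 0 :=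
  calc ∫ ω, (g * Z) ω ∂μ = ∫ ω, μ[g * Z|m] ω ∂μ := (integral_condExp hm).symm
    _ = ∫ ω, (g * μ[Z|m]) ω ∂μ :=
        integral_congr_ae (condExp_mul_of_stronglyMeasurable_left hg hgZ hZ)
    _ = 0 := by
        refine (integral_congr_ae (g := 0) ?_).trans (integral_zero' _ _)
        filter_upwards [hZ0] with ω hω
        simp [hω]

section Tilted

variable {e W b : Ω → ℝ}

theorem integrable_mul_of_mul_condExp_ae_eq (hm : m ≤ m₀) [SigmaFinite (μ.trim hm)]
    (he : Integrable e μ) (he0 : 0 ≤ᵐ[μ] e) (hb : StronglyMeasurable[m] b)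
    (hbe : b * μ[e|m] =ᵐ[μ] μ[W * e|m]) :
    Integrable (b * e) μ :=
  he.mul_of_integrable_mul_condExp hm he0 hb (integrable_condExp.congr hbe.symm)

theorem condExp_sub_mul_ae_eq_zero (hm : m ≤ m₀) [SigmaFinite (μ.trim hm)]
    (he : Integrable e μ) (he0 : 0 ≤ᵐ[μ] e) (hWe : Integrable (W * e) μ)
    (hb : StronglyMeasurable[m] b) (hbe : b * μ[e|m] =ᵐ[μ] μ[W * e|m]) :
    μ[(W - b) * e|m] =ᵐ[μ] 0 := by
  have hbe' := integrable_mul_of_mul_condExp_ae_eq hm he he0 hb hbe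
  rw [sub_mul]
  filter_upwards [condExp_sub hWe hbe' m, condExp_mul_of_stronglyMeasurable_left hb hbe' he,
    hbe] with ω hsub hpull hω
  rw [hsub, Pi.sub_apply, hpull, hω, sub_self, Pi.zero_apply]

end Tilted

end MeasureTheory

namespace ProbabilityTheory

theorem integral_ite_eq_measureReal_mul_integral_cond {Ω : Type*} [MeasurableSpace Ω]
    (μ : Measure Ω) [IsFiniteMeasure μ] {S : Ω → Bool} (hS : Measurable S) (f : Ω → ℝ) :
    ∫ ω, (if S ω then f ω else 0) ∂μ
      = μ.real {ω | S ω = true} * ∫ ω, f ω ∂μ[|{ω | S ω = true}] := by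
  set s := {ω | S ω = true}
  have hs : MeasurableSet s := hS (measurableSet_singleton true)
  have hite : (fun ω ↦ if S ω then f ω else 0) = s.indicator f := by
    ext ω
    simp [Set.indicator_apply, s]
  rw [hite, integral_indicator hs, cond, integral_smul_measure, smul_eq_mul, ← mul_assoc]
  by_cases hs0 : μ s = 0
  · simp [Measure.restrict_eq_zero.mpr hs0]
  · rw [measureReal_def, ← ENNReal.toReal_mul, ENNReal.mul_inv_cancel hs0 (measure_ne_top μ s),
      ENNReal.toReal_one, one_mul]

end ProbabilityTheory

theorem selection_model_augmentation_mean_zero_general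
    {Ω : Type*} [MeasurableSpace Ω] {𝒳 : Type*} [MeasurableSpace 𝒳]
    (μ : Measure Ω) [IsProbabilityMeasure μ]
    (X : Ω → 𝒳) (Y : Ω → ℝ) (S : Ω → Bool)
    (hX : Measurable X) (hS : Measurable S)
    (η : ℝ) (q : ℝ → ℝ)
    (ℓ : 𝒳 → ℝ → ℝ)
    (c r : 𝒳 → ℝ) (hc : Measurable c) (hr : Measurable r)
    (hexp_int : Integrable (fun ω => Real.exp (η * q (Y ω))) (μ[|{ω | S ω = true}]))
    (hWexp_int : Integrable (fun ω => ℓ (X ω) (Y ω) * Real.exp (η * q (Y ω)))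
      (μ[|{ω | S ω = true}]))
    (hcver : (fun ω => c (X ω)) =ᵐ[μ[|{ω | S ω = true}]]
      (μ[|{ω | S ω = true}])[fun ω => Real.exp (η * q (Y ω)) |
        MeasurableSpace.comap X inferInstance])
    (hcpos : ∀ᵐ ω ∂(μ[|{ω | S ω = true}]), 0 < c (X ω))
    (hrver : (fun ω => r (X ω)) =ᵐ[μ[|{ω | S ω = true}]]
      (μ[|{ω | S ω = true}])[fun ω => ℓ (X ω) (Y ω) * Real.exp (η * q (Y ω)) |
        MeasurableSpace.comap X inferInstance])
    -- an arbitrary measurable offset a*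
    (astar : 𝒳 → ℝ) (hastar : Measurable astar)
    (hintegrand₁ : Integrable (fun ω =>
      Real.exp (astar (X ω) + η * q (Y ω)) * (ℓ (X ω) (Y ω) - r (X ω) / c (X ω)))
      (μ[|{ω | S ω = true}])) :
    ∫ ω, (if S ω then Real.exp (astar (X ω) + η * q (Y ω))
        * (ℓ (X ω) (Y ω) - r (X ω) / c (X ω))
      else 0) ∂μ = 0 := by
  rw [integral_ite_eq_measureReal_mul_integral_cond μ hS, mul_eq_zero]
  right
  set ν : Measure Ω := μ[|{ω | S ω = true}]
  set m : MeasurableSpace Ω := MeasurableSpace.comap X inferInstance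
  have hm : m ≤ _ := hX.comap_le
  have hXm : Measurable[m] X := comap_measurable X
  set e : Ω → ℝ := fun ω ↦ Real.exp (η * q (Y ω))
  set W : Ω → ℝ := fun ω ↦ ℓ (X ω) (Y ω)
  set b : Ω → ℝ := fun ω ↦ r (X ω) / c (X ω)
  have hb : StronglyMeasurable[m] b := ((hr.comp hXm).div (hc.comp hXm)).stronglyMeasurable
  have he0 : 0 ≤ᵐ[ν] e := ae_of_all _ fun ω ↦ (Real.exp_pos _).le
  have hbe : b * ν[e|m] =ᵐ[ν] ν[W * e|m] := by
    filter_upwards [hcver, hcpos, hrver] with ω hcω hpos hrω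
    calc (b * ν[e|m]) ω = r (X ω) := by
          simp only [Pi.mul_apply, b, ← hcω]
          field_simp
      _ = ν[W * e|m] ω := hrω
  have hres : Integrable ((W - b) * e) ν := by
    rw [sub_mul]
    exact hWexp_int.sub (integrable_mul_of_mul_condExp_ae_eq hm hexp_int he0 hb hbe)
  have hF : (fun ω ↦ Real.exp (astar (X ω) + η * q (Y ω)) * (ℓ (X ω) (Y ω) - r (X ω) / c (X ω)))
      = (fun ω ↦ Real.exp (astar (X ω))) * ((W - b) * e) := by
    ext ω
    simp only [Pi.mul_apply, Pi.sub_apply, Real.exp_add, W, b, e]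
    ring
  have hg : StronglyMeasurable[m] fun ω ↦ Real.exp (astar (X ω)) :=
    (hastar.comp hXm).exp.stronglyMeasurable
  rw [hF] at hintegrand₁ ⊢
  exact integral_mul_eq_zero_of_condExp_eq_zero hm hg hintegrand₁ hres
    (condExp_sub_mul_ae_eq_zero hm hexp_int he0 hWexp_int hb hbe)

/-- Case 1 of the double-robustness Theorem 3 (selection-model parameterization): when
`b = r/c` is the true tilted conditional loss, the alternative-parameterization
augmentation term has μ-mean zero for every measurable offset `a*`:
`E_μ[1_{S=1} e^{a*(X) + η q(Y)} (W − b(X))] = 0`. -/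
theorem selection_model_augmentation_mean_zero
    {Ω : Type*} [MeasurableSpace Ω] {𝒳 : Type*} [MeasurableSpace 𝒳]
    (μ : Measure Ω) [IsProbabilityMeasure μ]
    (X : Ω → 𝒳) (Y : Ω → ℝ) (S : Ω → Bool)
    (hX : Measurable X) (hY : Measurable Y) (hS : Measurable S)
    (hS1 : 0 < μ {ω | S ω = true}) (hS0 : 0 < μ {ω | S ω = false})
    (η : ℝ) (q : ℝ → ℝ) (hq : Measurable q)
    (ℓ : 𝒳 → ℝ → ℝ) (hℓ : Measurable (Function.uncurry ℓ))
    (c r : 𝒳 → ℝ) (hc : Measurable c) (hr : Measurable r)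
    (hexp_int : Integrable (fun ω => Real.exp (η * q (Y ω))) (μ[|{ω | S ω = true}]))
    (hWexp_int : Integrable (fun ω => ℓ (X ω) (Y ω) * Real.exp (η * q (Y ω)))
      (μ[|{ω | S ω = true}]))
    (hcver : (fun ω => c (X ω)) =ᵐ[μ[|{ω | S ω = true}]]
      (μ[|{ω | S ω = true}])[fun ω => Real.exp (η * q (Y ω)) |
        MeasurableSpace.comap X inferInstance])
    (hcpos : ∀ᵐ ω ∂(μ[|{ω | S ω = true}]), 0 < c (X ω))
    (hrver : (fun ω => r (X ω)) =ᵐ[μ[|{ω | S ω = true}]]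
      (μ[|{ω | S ω = true}])[fun ω => ℓ (X ω) (Y ω) * Real.exp (η * q (Y ω)) |
        MeasurableSpace.comap X inferInstance])
    -- an arbitrary measurable offset a*
    (astar : 𝒳 → ℝ) (hastar : Measurable astar)
    (hintegrand : Integrable (fun ω =>
      if S ω then Real.exp (astar (X ω) + η * q (Y ω))
        * (ℓ (X ω) (Y ω) - r (X ω) / c (X ω))
      else 0) μ)
    (hintegrand₁ : Integrable (fun ω =>
      Real.exp (astar (X ω) + η * q (Y ω)) * (ℓ (X ω) (Y ω) - r (X ω) / c (X ω)))
      (μ[|{ω | S ω = true}])) :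
    ∫ ω, (if S ω then Real.exp (astar (X ω) + η * q (Y ω))
        * (ℓ (X ω) (Y ω) - r (X ω) / c (X ω))
      else 0) ∂μ = 0 :=
  selection_model_augmentation_mean_zero_general μ X Y S hX hS η q ℓ c r hc hr hexp_int hWexp_int
    hcver hcpos hrver astar hastar hintegrand₁
end

section
/- Assume positivity: 0 < p(X) < 1 μ-a.s. where p∘X is a version of E_μ[1_{S=1} | σ(X)], and define the true selection-model offset a(x) = ln((1 − p(x))/p(x)) − ln c(x). Then the selection-model weighted loss recovers the tilted g-formula functional: (1/μ(S=0)) · E_μ[ 1_{S=1} · e^{a(X) + η q(Y)} · W ] = E_{μ₀}[ b(X) ]. -/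
/-!
On `{S = 1}` the weight `e^{a(X)}` equals `(1 - p(X)) / (p(X) c(X))`, a function of `X`, so it
can be pulled out of the `μ₁`-conditional expectation given `X`, which replaces `W e^{η q(Y)}` by
`r(X)`. The weighted integral thus becomes `∫_{S=1} (1 - p(X)) / p(X) · b(X) dμ`; conditioning
`1_{S=1}` on `X` turns it into `∫ (1 - p(X)) b(X) dμ`, and conditioning `1_{S=0}` on `X` turns that
into `∫_{S=0} b(X) dμ = μ(S=0) E_{μ₀}[b(X)]`.
-/

open MeasureTheory ProbabilityTheory Real

section CondMeasure

variable {Ω : Type*} [MeasurableSpace Ω] {μ : Measure Ω} {s : Set Ω}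

lemma integrable_cond_iff_integrableOn (hs : μ s ≠ ⊤) {f : Ω → ℝ} :
    Integrable f μ[|s] ↔ IntegrableOn f s μ := by
  rcases eq_or_ne (μ s) 0 with h0 | h0
  · simp [cond_eq_zero_of_meas_eq_zero h0, IntegrableOn, Measure.restrict_eq_zero.mpr h0]
  · exact integrable_smul_measure (by simpa using hs) (by simpa using h0)

lemma ae_restrict_of_ae_cond (hs : μ s ≠ ⊤) {P : Ω → Prop} (h : ∀ᵐ ω ∂μ[|s], P ω) :
    ∀ᵐ ω ∂μ.restrict s, P ω :=
  (Measure.ae_ennreal_smul_measure_iff (ENNReal.inv_ne_zero.2 hs)).1 h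

lemma setIntegral_eq_toReal_mul_integral_cond (hs : μ s ≠ ⊤) (f : Ω → ℝ) :
    ∫ ω in s, f ω ∂μ = (μ s).toReal * ∫ ω, f ω ∂μ[|s] := by
  rcases eq_or_ne (μ s) 0 with h0 | h0
  · simp [h0, Measure.restrict_eq_zero.mpr h0]
  · rw [ProbabilityTheory.cond, integral_smul_measure, smul_eq_mul, ENNReal.toReal_inv,
      ← mul_assoc, mul_inv_cancel₀ (ENNReal.toReal_ne_zero.mpr ⟨h0, hs⟩), one_mul]

end CondMeasure

lemma ae_eq_condExp_indicator_compl {Ω : Type*} {m m₀ : MeasurableSpace Ω} {μ : Measure Ω}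
    [IsFiniteMeasure μ] (hm : m ≤ m₀) {s : Set Ω} (hs : MeasurableSet s) {p : Ω → ℝ}
    (hp : p =ᵐ[μ] μ[s.indicator 1 | m]) :
    (fun ω => 1 - p ω) =ᵐ[μ] μ[sᶜ.indicator 1 | m] := by
  rw [Set.indicator_compl]
  filter_upwards [condExp_sub (m := m) (integrable_const (1 : ℝ))
    ((integrable_const 1).indicator hs), hp] with ω hsub hω
  exact (hsub.trans (by rw [Pi.sub_apply, condExp_const hm, hω]; rfl)).symm

section PullOut

variable {Ω 𝒳 : Type*} [MeasurableSpace Ω] [MeasurableSpace 𝒳] {μ : Measure Ω} {X : Ω → 𝒳}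
  {f h : 𝒳 → ℝ} {g : Ω → ℝ}

lemma condExp_comp_mul_ae_eq (hf : Measurable f)
    (hfg : Integrable (fun ω => f (X ω) * g ω) μ) (hg : Integrable g μ)
    (hh : (fun ω => h (X ω)) =ᵐ[μ] μ[g | MeasurableSpace.comap X inferInstance]) :
    μ[fun ω => f (X ω) * g ω | MeasurableSpace.comap X inferInstance]
      =ᵐ[μ] fun ω => f (X ω) * h (X ω) := by
  have hfX : StronglyMeasurable[MeasurableSpace.comap X inferInstance] fun ω => f (X ω) :=
    (hf.comp (comap_measurable X)).stronglyMeasurable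
  filter_upwards [condExp_mul_of_stronglyMeasurable_left hfX hfg hg, hh] with ω hpull hω
  exact hpull.trans (by rw [Pi.mul_apply, hω])

lemma integrable_comp_mul_of_ae_eq_condExp (hf : Measurable f)
    (hfg : Integrable (fun ω => f (X ω) * g ω) μ) (hg : Integrable g μ)
    (hh : (fun ω => h (X ω)) =ᵐ[μ] μ[g | MeasurableSpace.comap X inferInstance]) :
    Integrable (fun ω => f (X ω) * h (X ω)) μ :=
  integrable_condExp.congr (condExp_comp_mul_ae_eq hf hfg hg hh)

lemma integral_comp_mul_eq_of_ae_eq_condExp [IsFiniteMeasure μ] (hX : Measurable X)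
    (hf : Measurable f) (hfg : Integrable (fun ω => f (X ω) * g ω) μ) (hg : Integrable g μ)
    (hh : (fun ω => h (X ω)) =ᵐ[μ] μ[g | MeasurableSpace.comap X inferInstance]) :
    ∫ ω, f (X ω) * g ω ∂μ = ∫ ω, f (X ω) * h (X ω) ∂μ := by
  rw [← integral_condExp hX.comap_le]
  exact integral_congr_ae (condExp_comp_mul_ae_eq hf hfg hg hh)

lemma setIntegral_comp_eq_of_ae_eq_condExp_indicator [IsFiniteMeasure μ] {s : Set Ω}
    (hX : Measurable X) (hs : MeasurableSet s) (hf : Measurable f)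
    (hfs : IntegrableOn (fun ω => f (X ω)) s μ)
    (hh : (fun ω => h (X ω)) =ᵐ[μ] μ[s.indicator 1 | MeasurableSpace.comap X inferInstance]) :
    ∫ ω in s, f (X ω) ∂μ = ∫ ω, f (X ω) * h (X ω) ∂μ := by
  have hind : (fun ω => f (X ω) * s.indicator 1 ω) = s.indicator fun ω => f (X ω) := by
    ext ω
    by_cases hω : ω ∈ s <;> simp [hω]
  rw [← integral_indicator hs, ← hind]
  refine integral_comp_mul_eq_of_ae_eq_condExp hX hf ?_ ((integrable_const 1).indicator hs) hh
  rwa [hind, integrable_indicator_iff hs]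

lemma setIntegral_compl_comp_eq_of_ae_eq_condExp_indicator [IsFiniteMeasure μ] {s : Set Ω}
    {p : 𝒳 → ℝ} (hX : Measurable X) (hs : MeasurableSet s) (hf : Measurable f)
    (hfs : IntegrableOn (fun ω => f (X ω)) sᶜ μ)
    (hp : (fun ω => p (X ω)) =ᵐ[μ] μ[s.indicator 1 | MeasurableSpace.comap X inferInstance]) :
    ∫ ω in sᶜ, f (X ω) ∂μ = ∫ ω, f (X ω) * (1 - p (X ω)) ∂μ :=
  setIntegral_comp_eq_of_ae_eq_condExp_indicator (h := fun x => 1 - p x) hX hs.compl hf hfs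
    (ae_eq_condExp_indicator_compl hX.comap_le hs hp)

lemma setIntegral_comp_mul_eq_of_ae_eq_condExp_cond [IsFiniteMeasure μ] {s : Set Ω} {V : Ω → ℝ}
    {r p : 𝒳 → ℝ} (hX : Measurable X) (hs : MeasurableSet s) (hf : Measurable f)
    (hr : Measurable r) (hfV : IntegrableOn (fun ω => f (X ω) * V ω) s μ) (hV : Integrable V μ[|s])
    (hrV : (fun ω => r (X ω)) =ᵐ[μ[|s]] μ[|s][V | MeasurableSpace.comap X inferInstance])
    (hp : (fun ω => p (X ω)) =ᵐ[μ] μ[s.indicator 1 | MeasurableSpace.comap X inferInstance]) :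
    ∫ ω in s, f (X ω) * V ω ∂μ = ∫ ω, f (X ω) * r (X ω) * p (X ω) ∂μ := by
  have hμs := measure_ne_top μ s
  have hfV' := (integrable_cond_iff_integrableOn hμs).2 hfV
  have hfr := integrable_comp_mul_of_ae_eq_condExp hf hfV' hV hrV
  rw [setIntegral_eq_toReal_mul_integral_cond hμs,
    integral_comp_mul_eq_of_ae_eq_condExp hX hf hfV' hV hrV,
    ← setIntegral_eq_toReal_mul_integral_cond hμs]
  exact setIntegral_comp_eq_of_ae_eq_condExp_indicator (f := fun x => f x * r x) hX hs
    (hf.mul hr) ((integrable_cond_iff_integrableOn hμs).1 hfr) hp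

end PullOut

lemma exp_log_odds_sub_log_add {p c t : ℝ} (hp₀ : 0 < p) (hp₁ : p < 1) (hc : 0 < c) :
    exp (log ((1 - p) / p) - log c + t) = (1 - p) / (p * c) * exp t := by
  rw [exp_add, exp_sub, exp_log (div_pos (by linarith) hp₀), exp_log hc, div_div]

lemma odds_div_mul_mul_cancel {p c r : ℝ} (hp : p ≠ 0) :
    (1 - p) / (p * c) * r * p = r / c * (1 - p) := by
  rw [mul_comm p c, ← div_div, div_mul_eq_mul_div, div_mul_eq_mul_div, mul_div_cancel_right₀ _ hp]
  ring

theorem selection_model_weighting_recovers_gformula_general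
    {Ω : Type*} [MeasurableSpace Ω] {𝒳 : Type*} [MeasurableSpace 𝒳]
    (μ : Measure Ω) [IsProbabilityMeasure μ]
    (X : Ω → 𝒳) (Y : Ω → ℝ) (S : Ω → Bool)
    (hX : Measurable X) (hS : Measurable S)
    (hS0 : 0 < μ {ω | S ω = false})
    (η : ℝ) (q : ℝ → ℝ)
    (ℓ : 𝒳 → ℝ → ℝ)
    (c r : 𝒳 → ℝ) (hc : Measurable c) (hr : Measurable r)
    (hWexp_int : Integrable (fun ω => ℓ (X ω) (Y ω) * Real.exp (η * q (Y ω)))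
      (μ[|{ω | S ω = true}]))
    (hcpos : ∀ᵐ ω ∂(μ[|{ω | S ω = true}]), 0 < c (X ω))
    (hrver : (fun ω => r (X ω)) =ᵐ[μ[|{ω | S ω = true}]]
      (μ[|{ω | S ω = true}])[fun ω => ℓ (X ω) (Y ω) * Real.exp (η * q (Y ω)) |
        MeasurableSpace.comap X inferInstance])
    -- the true propensity, with positivity 0 < p(X) < 1 μ-a.s.
    (p : 𝒳 → ℝ) (hp : Measurable p)
    (hpver : (fun ω => p (X ω)) =ᵐ[μ]
      μ[fun ω => if S ω then (1 : ℝ) else 0 | MeasurableSpace.comap X inferInstance])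
    (hppos : ∀ᵐ ω ∂μ, 0 < p (X ω) ∧ p (X ω) < 1)
    -- the true selection-model offset
    (a : 𝒳 → ℝ)
    (ha : ∀ x, a x = Real.log ((1 - p x) / p x) - Real.log (c x))
    (hb_int₀ : Integrable (fun ω => r (X ω) / c (X ω)) (μ[|{ω | S ω = false}]))
    (hwt_int : Integrable (fun ω =>
      if S ω then Real.exp (a (X ω) + η * q (Y ω)) * ℓ (X ω) (Y ω) else 0) μ) :
    (μ {ω | S ω = false}).toReal⁻¹
      * ∫ ω, (if S ω then Real.exp (a (X ω) + η * q (Y ω)) * ℓ (X ω) (Y ω) else 0) ∂μ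
      = ∫ ω, r (X ω) / c (X ω) ∂(μ[|{ω | S ω = false}]) := by
  set s₁ := {ω | S ω = true}
  have hs₁ : MeasurableSet s₁ := hS (measurableSet_singleton true)
  have hs₀ : {ω | S ω = false} = s₁ᶜ := by ext; simp [s₁]
  rw [hs₀] at hS0 hb_int₀ ⊢
  have hind : ∀ F : Ω → ℝ, (fun ω => if S ω then F ω else 0) = s₁.indicator F := by
    intro F; ext ω; by_cases hω : S ω <;> simp [s₁, hω]
  set w : 𝒳 → ℝ := fun x => (1 - p x) / (p x * c x)
  have hw : Measurable w := (measurable_const.sub hp).div (hp.mul hc)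
  have hweight : (fun ω => exp (a (X ω) + η * q (Y ω)) * ℓ (X ω) (Y ω))
      =ᵐ[μ.restrict s₁] fun ω => w (X ω) * (ℓ (X ω) (Y ω) * exp (η * q (Y ω))) := by
    filter_upwards [ae_restrict_of_ae hppos, ae_restrict_of_ae_cond (measure_ne_top μ s₁) hcpos]
      with ω ⟨hp₀, hp₁⟩ hcω
    rw [ha, exp_log_odds_sub_log_add hp₀ hp₁ hcω, mul_comm (ℓ _ _)]
    ring
  have hwV : IntegrableOn (fun ω => w (X ω) * (ℓ (X ω) (Y ω) * exp (η * q (Y ω)))) s₁ μ := by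
    rw [hind, integrable_indicator_iff hs₁] at hwt_int
    exact hwt_int.congr hweight
  have hp_indicator := hind 1 ▸ hpver
  calc (μ s₁ᶜ).toReal⁻¹
        * ∫ ω, (if S ω then exp (a (X ω) + η * q (Y ω)) * ℓ (X ω) (Y ω) else 0) ∂μ
      = (μ s₁ᶜ).toReal⁻¹ * ∫ ω, w (X ω) * r (X ω) * p (X ω) ∂μ := by
        rw [hind, integral_indicator hs₁, integral_congr_ae hweight,
          setIntegral_comp_mul_eq_of_ae_eq_condExp_cond hX hs₁ hw hr hwV hWexp_int hrver
            hp_indicator]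
    _ = (μ s₁ᶜ).toReal⁻¹ * ∫ ω, r (X ω) / c (X ω) * (1 - p (X ω)) ∂μ := by
        congr 1
        exact integral_congr_ae (hppos.mono fun ω hpω => odds_div_mul_mul_cancel hpω.1.ne')
    _ = ∫ ω, r (X ω) / c (X ω) ∂μ[|s₁ᶜ] := by
        rw [← setIntegral_compl_comp_eq_of_ae_eq_condExp_indicator (f := fun x => r x / c x)
            hX hs₁ (hr.div hc) ((integrable_cond_iff_integrableOn (measure_ne_top μ _)).1 hb_int₀)
            hp_indicator,
          setIntegral_eq_toReal_mul_integral_cond (measure_ne_top μ _), ← mul_assoc,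
          inv_mul_cancel₀ (ENNReal.toReal_ne_zero.mpr ⟨hS0.ne', measure_ne_top μ _⟩), one_mul]

/-- Case 2 of the double-robustness Theorem 3 (selection-model parameterization), first
part: with the true selection-model offset `a(x) = ln((1 − p(x))/p(x)) − ln c(x)`, the
selection-model weighted loss recovers the tilted g-formula functional:
`(1/μ(S=0)) E_μ[1_{S=1} e^{a(X) + η q(Y)} W] = E_{μ₀}[b(X)]`. -/
theorem selection_model_weighting_recovers_gformula
    {Ω : Type*} [MeasurableSpace Ω] {𝒳 : Type*} [MeasurableSpace 𝒳]
    (μ : Measure Ω) [IsProbabilityMeasure μ]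
    (X : Ω → 𝒳) (Y : Ω → ℝ) (S : Ω → Bool)
    (hX : Measurable X) (hY : Measurable Y) (hS : Measurable S)
    (hS1 : 0 < μ {ω | S ω = true}) (hS0 : 0 < μ {ω | S ω = false})
    (η : ℝ) (q : ℝ → ℝ) (hq : Measurable q)
    (ℓ : 𝒳 → ℝ → ℝ) (hℓ : Measurable (Function.uncurry ℓ))
    (c r : 𝒳 → ℝ) (hc : Measurable c) (hr : Measurable r)
    (hexp_int : Integrable (fun ω => Real.exp (η * q (Y ω))) (μ[|{ω | S ω = true}]))
    (hWexp_int : Integrable (fun ω => ℓ (X ω) (Y ω) * Real.exp (η * q (Y ω)))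
      (μ[|{ω | S ω = true}]))
    (hcver : (fun ω => c (X ω)) =ᵐ[μ[|{ω | S ω = true}]]
      (μ[|{ω | S ω = true}])[fun ω => Real.exp (η * q (Y ω)) |
        MeasurableSpace.comap X inferInstance])
    (hcpos : ∀ᵐ ω ∂(μ[|{ω | S ω = true}]), 0 < c (X ω))
    (hrver : (fun ω => r (X ω)) =ᵐ[μ[|{ω | S ω = true}]]
      (μ[|{ω | S ω = true}])[fun ω => ℓ (X ω) (Y ω) * Real.exp (η * q (Y ω)) |
        MeasurableSpace.comap X inferInstance])
    -- the true propensity, with positivity 0 < p(X) < 1 μ-a.s.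
    (p : 𝒳 → ℝ) (hp : Measurable p)
    (hpver : (fun ω => p (X ω)) =ᵐ[μ]
      μ[fun ω => if S ω then (1 : ℝ) else 0 | MeasurableSpace.comap X inferInstance])
    (hppos : ∀ᵐ ω ∂μ, 0 < p (X ω) ∧ p (X ω) < 1)
    -- the true selection-model offset
    (a : 𝒳 → ℝ)
    (ha : ∀ x, a x = Real.log ((1 - p x) / p x) - Real.log (c x))
    (hb_int₀ : Integrable (fun ω => r (X ω) / c (X ω)) (μ[|{ω | S ω = false}]))
    (hwt_int : Integrable (fun ω =>
      if S ω then Real.exp (a (X ω) + η * q (Y ω)) * ℓ (X ω) (Y ω) else 0) μ) :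
    (μ {ω | S ω = false}).toReal⁻¹
      * ∫ ω, (if S ω then Real.exp (a (X ω) + η * q (Y ω)) * ℓ (X ω) (Y ω) else 0) ∂μ
      = ∫ ω, r (X ω) / c (X ω) ∂(μ[|{ω | S ω = false}]) :=
  selection_model_weighting_recovers_gformula_general μ X Y S hX hS hS0 η q ℓ c r hc hr hWexp_int
    hcpos hrver p hp hpver hppos a ha hb_int₀ hwt_int
end
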